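/- arXiv:math/0607703 — 13 statements merged into one kernel-verified Lean document; each statement's English description precedes it below -/
import Mathlib

section
/- Let G and H be finite groups, U a finite (H,G)-biset, X a finite G-set, and T a subgroup of H. Then the cardinality of the T-fixed points of the H-set Hom_G(U^op, X) equals the product over u in a set of representatives of (T,G)-double cosets in U of the cardinality of the T^u-fixed points of X, where T^u = {g ∈ G : ∃ t ∈ T, tu = ug}. -/
open MulOpposite

/-- Let `U` be a finite `(H,G)`-biset, `X` a finite `G`-set and `T ≤ H`. The set
`Hom_G(U^op, X)` of `G`-maps `f : U → X` (i.e. `f(u·g) = g⁻¹·f(u)`) carries the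
`H`-action `(h·f)(u) = f(h⁻¹·u)`; its set of `T`-fixed points has cardinality
`∏_{u ∈ [T\U/G]} |X^(Tᵘ)|`, where `Tᵘ = {g ∈ G | ∃ t ∈ T, t·u = u·g}` and
`R = [T\U/G]` is a set of representatives of the `(T,G)`-double orbits on `U`. -/
theorem stmt1 {G H U X : Type} [Group G] [Group H] [Fintype G] [Fintype H]
    [Fintype U] [Fintype X]
    [MulAction H U] [MulAction Gᵐᵒᵖ U] [MulAction G X]
    (hcomm : ∀ (h : H) (g : Gᵐᵒᵖ) (u : U), g • (h • u) = h • (g • u))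
    (T : Subgroup H)
    (Tu : U → Subgroup G)
    (hTu : ∀ (u : U) (g : G), g ∈ Tu u ↔ ∃ t ∈ T, t • u = op g • u)
    (R : Finset U)
    (hR1 : ∀ v : U, ∃ u ∈ R, ∃ t ∈ T, ∃ g : G, t • (op g • v) = u)
    (hR2 : ∀ u₁ ∈ R, ∀ u₂ ∈ R, (∃ t ∈ T, ∃ g : G, t • (op g • u₁) = u₂) → u₁ = u₂) :
    Nat.card {f : U → X // (∀ (g : G) (u : U), f (op g • u) = g⁻¹ • f u) ∧
        (∀ t ∈ T, ∀ u : U, f (t • u) = f u)} =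
      ∏ u ∈ R, Nat.card {x : X // ∀ g ∈ Tu u, g • x = x} := by
  classical
  choose ρ hρR τ hτT γ hγ using hR1
  -- If `t • (op g • u) = u` with `t ∈ T`, then `g ∈ Tu u`.
  have memTu : ∀ (u : U) (t : H), t ∈ T → ∀ g : G, t • (op g • u) = u → g ∈ Tu u := by
    intro u t ht g h
    have h2 : (op g)⁻¹ • (t • (op g • u)) = (op g)⁻¹ • u := congrArg _ h
    rw [hcomm, inv_smul_smul] at h2
    have : g⁻¹ ∈ Tu u := (hTu u g⁻¹).mpr ⟨t, ht, by rw [op_inv]; exact h2⟩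
    simpa using (Tu u).inv_mem this
  -- Any triple for `v` agrees with the canonical one.
  have key : ∀ (v u₁ : U), u₁ ∈ R → ∀ t₁ : H, t₁ ∈ T → ∀ g₁ : G,
      t₁ • (op g₁ • v) = u₁ → u₁ = ρ v ∧ g₁⁻¹ * γ v ∈ Tu u₁ := by
    intro v u₁ h₁ t₁ ht₁ g₁ he
    have hcomb : (τ v * t₁⁻¹) • (op (g₁⁻¹ * γ v) • u₁) = ρ v := by
      calc (τ v * t₁⁻¹) • (op (g₁⁻¹ * γ v) • u₁)
          = (τ v * t₁⁻¹) • (op (g₁⁻¹ * γ v) • (t₁ • (op g₁ • v))) := by rw [he]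
        _ = (τ v * t₁⁻¹) • (t₁ • (op (g₁⁻¹ * γ v) • (op g₁ • v))) := by rw [hcomm]
        _ = (τ v * t₁⁻¹) • (t₁ • (op (g₁ * (g₁⁻¹ * γ v)) • v)) := by
            rw [smul_smul (op (g₁⁻¹ * γ v)) (op g₁), ← op_mul]
        _ = τ v • (t₁⁻¹ • (t₁ • (op (γ v) • v))) := by
            rw [mul_inv_cancel_left, mul_smul]
        _ = ρ v := by rw [inv_smul_smul]; exact hγ v
    have heq : u₁ = ρ v :=
      hR2 u₁ h₁ (ρ v) (hρR v) ⟨τ v * t₁⁻¹, T.mul_mem (hτT v) (T.inv_mem ht₁),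
        g₁⁻¹ * γ v, hcomb⟩
    refine ⟨heq, memTu u₁ (τ v * t₁⁻¹) (T.mul_mem (hτT v) (T.inv_mem ht₁)) _ ?_⟩
    rw [hcomb, heq]
  -- the inverse map
  set F : (∀ r : {u // u ∈ R}, {x : X // ∀ g ∈ Tu r.1, g • x = x}) → U → X :=
    fun x v => γ v • (x ⟨ρ v, hρR v⟩).1 with hF
  have wd : ∀ (x : ∀ r : {u // u ∈ R}, {x : X // ∀ g ∈ Tu r.1, g • x = x})
      (v u₁ : U) (h₁ : u₁ ∈ R) (t₁ : H), t₁ ∈ T → ∀ g₁ : G,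
      t₁ • (op g₁ • v) = u₁ → g₁ • (x ⟨u₁, h₁⟩).1 = F x v := by
    intro x v u₁ h₁ t₁ ht₁ g₁ he
    obtain ⟨heq, hm⟩ := key v u₁ h₁ t₁ ht₁ g₁ he
    have hsub : (⟨u₁, h₁⟩ : {u // u ∈ R}) = ⟨ρ v, hρR v⟩ := Subtype.ext heq
    have hfix := (x ⟨u₁, h₁⟩).2 _ hm
    rw [hsub] at hfix ⊢
    show g₁ • (x ⟨ρ v, hρR v⟩).1 = γ v • (x ⟨ρ v, hρR v⟩).1
    calc g₁ • (x ⟨ρ v, hρR v⟩).1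
        = g₁ • ((g₁⁻¹ * γ v) • (x ⟨ρ v, hρR v⟩).1) := by rw [hfix]
      _ = γ v • (x ⟨ρ v, hρR v⟩).1 := by rw [← mul_smul, mul_inv_cancel_left]
  have e : {f : U → X // (∀ (g : G) (u : U), f (op g • u) = g⁻¹ • f u) ∧
        (∀ t ∈ T, ∀ u : U, f (t • u) = f u)} ≃
      (∀ r : {u // u ∈ R}, {x : X // ∀ g ∈ Tu r.1, g • x = x}) := by
    refine ⟨fun f r => ⟨f.1 r.1, ?_⟩, fun x => ⟨F x, ?_, ?_⟩, ?_, ?_⟩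
    · intro g hg
      obtain ⟨t, ht, hteq⟩ := (hTu r.1 g).mp hg
      have h1 : f.1 (t • r.1) = f.1 r.1 := f.2.2 t ht r.1
      have h2 : f.1 (op g • r.1) = g⁻¹ • f.1 r.1 := f.2.1 g r.1
      have h3 : f.1 r.1 = g⁻¹ • f.1 r.1 := by rw [← h2, ← hteq, h1]
      have h4 : g • (g⁻¹ • f.1 r.1) = g • f.1 r.1 := congrArg (g • ·) h3.symm
      rw [smul_inv_smul] at h4
      exact h4.symm
    · intro a v
      have htri : τ v • (op (a⁻¹ * γ v) • (op a • v)) = ρ v := by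
        rw [← mul_smul, ← op_mul, mul_inv_cancel_left]
        exact hγ v
      have hw := wd x (op a • v) (ρ v) (hρR v) (τ v) (hτT v) (a⁻¹ * γ v) htri
      rw [← hw, mul_smul]
    · intro s hs v
      have htri : (τ v * s⁻¹) • (op (γ v) • (s • v)) = ρ v := by
        rw [hcomm, mul_smul, inv_smul_smul]
        exact hγ v
      have hw := wd x (s • v) (ρ v) (hρR v) (τ v * s⁻¹)
        (T.mul_mem (hτT v) (T.inv_mem hs)) (γ v) htri
      rw [← hw]
    · intro f
      ext v
      show γ v • f.1 (ρ v) = f.1 v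
      have h1 : f.1 (ρ v) = f.1 (τ v • (op (γ v) • v)) := by rw [hγ v]
      rw [h1, f.2.2 (τ v) (hτT v), f.2.1]
      exact smul_inv_smul _ _
    · intro x
      funext r
      ext
      have hw := wd x r.1 r.1 r.2 1 T.one_mem 1 (by simp)
      simpa using hw.symm
  rw [Nat.card_congr e, Nat.card_pi, ← Finset.prod_coe_sort R]
end

section
/- If P is a finite p-group of odd order, then the group of units of the Burnside ring B(P) is {±[P/P]}, i.e., B^×(P) ≅ ℤ/2 generated by −1. -/
/-- The number of `K`-fixed points on the coset space `G ⧸ H`. -/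
noncomputable def fixedCard {G : Type} [Group G] (H K : Subgroup G) : ℤ :=
  (Nat.card {x : G ⧸ H // ∀ k ∈ K, k • x = x} : ℤ)

lemma fixedCard_bot {G : Type} [Group G] (H : Subgroup G) :
    fixedCard H ⊥ = (Nat.card (G ⧸ H) : ℤ) := by
  unfold fixedCard
  congr 1
  exact Nat.card_congr (Equiv.subtypeUnivEquiv (fun x k hk => by
    simp [Subgroup.mem_bot] at hk; simp [hk]))

lemma fixedCard_eq_fixedPoints {G : Type} [Group G] (H K : Subgroup G) :
    fixedCard H K = (Nat.card (MulAction.fixedPoints K (G ⧸ H)) : ℤ) := by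
  unfold fixedCard
  congr 1
  refine Nat.card_congr (Equiv.subtypeEquivRight fun x => ?_)
  simp [MulAction.fixedPoints, Subgroup.smul_def, SetLike.forall]
  exact Iff.rfl

lemma fixedCard_modEq {p : ℕ} [Fact p.Prime] {G : Type} [Group G] [Fintype G]
    (hP : IsPGroup p G) (H K : Subgroup G) :
    (p : ℤ) ∣ fixedCard H K - fixedCard H ⊥ := by
  rw [fixedCard_bot, fixedCard_eq_fixedPoints]
  exact_mod_cast ((hP.to_subgroup K).card_modEq_card_fixedPoints (G ⧸ H)).dvd

/-- An abstract model of the Burnside ring of `G`, given by its canonical basis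
`bas H = [G/H]` and the mark (fixed-point) ring homomorphisms, which are jointly
injective, and whose images of the basis elements are the tables of marks. -/
structure BurnsideModel (G : Type) [Group G] [Fintype G] where
  carrier : Type
  [ring : CommRing carrier]
  mark : Subgroup G → carrier →+* ℤ
  bas : Subgroup G → carrier
  mark_bas : ∀ K H : Subgroup G, mark K (bas H) = fixedCard H K
  mark_injective : ∀ a b : carrier, (∀ H, mark H a = mark H b) → a = b
  bas_span : ∀ a : carrier, a ∈ Submodule.span ℤ (Set.range bas)

attribute [instance] BurnsideModel.ring

lemma mark_modEq {p : ℕ} [Fact p.Prime] {P : Type} [Group P] [Fintype P]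
    (hP : IsPGroup p P) (M : BurnsideModel P) (a : M.carrier) (K : Subgroup P) :
    (p : ℤ) ∣ M.mark K a - M.mark ⊥ a := by
  refine Submodule.span_induction ?_ ?_ ?_ ?_ (M.bas_span a)
  · rintro x ⟨H, rfl⟩
    rw [M.mark_bas, M.mark_bas]
    exact fixedCard_modEq hP H K
  · simp
  · intro x y _ _ hx hy
    have := dvd_add hx hy
    rw [map_add, map_add]
    ring_nf
    ring_nf at this
    convert this using 1
    · rfl
    ring
  · intro z x _ hx
    rw [map_zsmul, map_zsmul]
    rw [show z • M.mark K x - z • M.mark ⊥ x = z * (M.mark K x - M.mark ⊥ x) by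
      simp [zsmul_eq_mul]; ring]
    exact hx.mul_left z

/-- If `P` is a `p`-group of odd order, then the unit group of its Burnside ring
is `{±[P/P]} = {1, -1}`. -/
theorem stmt3 {p : ℕ} (hp : p.Prime) (hodd : Odd p) {P : Type} [Group P] [Fintype P]
    (hP : IsPGroup p P) (M : BurnsideModel P) :
    {a : M.carrier | IsUnit a} = {1, -1} := by
  haveI : Fact p.Prime := ⟨hp⟩
  ext a
  simp only [Set.mem_setOf_eq, Set.mem_insert_iff, Set.mem_singleton_iff]
  constructor
  · intro ha
    have hmark : ∀ K, M.mark K a = 1 ∨ M.mark K a = -1 := fun K =>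
      Int.isUnit_iff.mp (ha.map (M.mark K))
    have hpn2 : ¬ ((p : ℤ) ∣ 2) := by
      intro h
      have hle : (p : ℤ) ≤ 2 := Int.le_of_dvd (by norm_num) h
      have h2 := hp.two_le
      have hpe : p = 2 := by omega
      rw [hpe] at hodd
      rw [Nat.odd_iff] at hodd; omega
    have key : ∀ K, M.mark K a = M.mark ⊥ a := by
      intro K
      have hd := mark_modEq hP M a K
      rcases hmark K with h1 | h1 <;> rcases hmark ⊥ with h2 | h2 <;>
          rw [h1, h2] at hd ⊢ <;> try rfl
      · rw [show (1 : ℤ) - -1 = 2 by ring] at hd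
        exact absurd hd hpn2
      · rw [show (-1 : ℤ) - 1 = -2 by ring] at hd
        exact absurd (dvd_neg.mp hd) hpn2
    rcases hmark ⊥ with h | h
    · left
      refine M.mark_injective a 1 fun K => ?_
      rw [key K, h, map_one]
    · right
      refine M.mark_injective a (-1) fun K => ?_
      rw [key K, h, map_neg, map_one]
  · rintro (rfl | rfl)
    · exact isUnit_one
    · exact isUnit_one.neg
end

section
/- Let G be a finite group with |Z(G)| > 2. Then the faithful part ∂B^×(G) of the unit group of the Burnside ring is trivial: any unit a ∈ B^×(G) satisfying |a^H| = 1 for all subgroups H with H ∩ Z(G) ≠ 1 must equal the identity [G/G]. -/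
section Aux

variable {G : Type} [Group G]

/-- The set of `K`-fixed points on `G ⧸ H`. -/
abbrev Xset (H K : Subgroup G) := {x : G ⧸ H // ∀ k ∈ K, k • x = x}

/-- The centre acts on the `K`-fixed points of `G ⧸ H`. -/
noncomputable instance centerAction (H K : Subgroup G) :
    MulAction (Subgroup.center G) (Xset H K) where
  smul z x := ⟨(z : G) • x.1, fun k hk => by
    rw [smul_smul, Subgroup.mem_center_iff.mp z.2 k, ← smul_smul, x.2 k hk]⟩
  one_smul x := Subtype.ext (one_smul G x.1)
  mul_smul z w x := Subtype.ext (mul_smul (z : G) (w : G) x.1)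

lemma smul_Xset_val (H K : Subgroup G) (z : Subgroup.center G) (x : Xset H K) :
    (z • x).1 = (z : G) • x.1 := rfl

/-- Fixed points of `z` on the `K`-fixed points are the `K ⊔ ⟨z⟩`-fixed points. -/
def fixedEquiv (H K : Subgroup G) (z : Subgroup.center G) :
    {x : G ⧸ H // ∀ g ∈ K ⊔ Subgroup.zpowers (z : G), g • x = x} ≃
      MulAction.fixedBy (Xset H K) z where
  toFun x := ⟨⟨x.1, fun k hk => x.2 k (Subgroup.mem_sup_left hk)⟩,
    Subtype.ext (x.2 z (Subgroup.mem_sup_right (Subgroup.mem_zpowers _)))⟩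
  invFun y := ⟨y.1.1, fun g hg => by
    have h1 : K ≤ MulAction.stabilizer G y.1.1 := fun k hk => y.1.2 k hk
    have h2 : (z : G) ∈ MulAction.stabilizer G y.1.1 := congrArg Subtype.val y.2
    exact sup_le h1 (Subgroup.zpowers_le.mpr h2) hg⟩
  left_inv x := rfl
  right_inv y := rfl

lemma fixedCard_eq (H K : Subgroup G) (z : Subgroup.center G) :
    fixedCard H (K ⊔ Subgroup.zpowers (z : G)) =
      (Nat.card (MulAction.fixedBy (Xset H K) z) : ℤ) := by
  unfold fixedCard
  rw [Nat.card_congr (fixedEquiv H K z)]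

/-- Burnside's lemma gives the key divisibility on each basis element. -/
lemma key_dvd [Fintype G] [Fintype (Subgroup.center G)] (H K : Subgroup G) :
    (Nat.card (Subgroup.center G) : ℤ) ∣
      ∑ z : Subgroup.center G, fixedCard H (K ⊔ Subgroup.zpowers (z : G)) := by
  haveI : ∀ z : Subgroup.center G, Fintype (MulAction.fixedBy (Xset H K) z) :=
    fun z => Fintype.ofFinite _
  haveI : Fintype (Quotient (MulAction.orbitRel (Subgroup.center G) (Xset H K))) :=
    Fintype.ofFinite _
  have hb := MulAction.sum_card_fixedBy_eq_card_orbits_mul_card_group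
    (Subgroup.center G) (Xset H K)
  refine ⟨(Fintype.card (Quotient (MulAction.orbitRel (Subgroup.center G) (Xset H K))) : ℤ), ?_⟩
  calc ∑ z : Subgroup.center G, fixedCard H (K ⊔ Subgroup.zpowers (z : G))
      = ∑ z : Subgroup.center G, (Fintype.card (MulAction.fixedBy (Xset H K) z) : ℤ) := by
        refine Finset.sum_congr rfl fun z _ => ?_
        rw [fixedCard_eq, Nat.card_eq_fintype_card]
    _ = ((∑ z : Subgroup.center G, Fintype.card (MulAction.fixedBy (Xset H K) z) : ℕ) : ℤ) := by
        push_cast; ring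
    _ = _ := by
        rw [hb, Nat.card_eq_fintype_card]; push_cast; ring

end Aux

/-- If `|Z(G)| > 2`, the faithful part of `B^×(G)` is trivial: any unit `a` with
`|a^H| = 1` for every subgroup `H` meeting the centre nontrivially equals `[G/G] = 1`. -/
theorem stmt5 {G : Type} [Group G] [Fintype G] (M : BurnsideModel G)
    (hZ : 2 < Nat.card (Subgroup.center G))
    (a : M.carrier) (ha : IsUnit a)
    (h1 : ∀ H : Subgroup G, H ⊓ Subgroup.center G ≠ ⊥ → M.mark H a = 1) :
    a = 1 := by
  classical
  haveI : Fintype (Subgroup.center G) := Fintype.ofFinite _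
  set N : ℤ := (Nat.card (Subgroup.center G) : ℤ) with hN
  -- Step 1: divisibility for all elements via span
  have key : ∀ (K : Subgroup G) (b : M.carrier),
      N ∣ ∑ z : Subgroup.center G, M.mark (K ⊔ Subgroup.zpowers (z : G)) b := by
    intro K b
    induction M.bas_span b using Submodule.span_induction with
    | mem x h =>
      obtain ⟨H, rfl⟩ := h
      have : ∀ z : Subgroup.center G,
          M.mark (K ⊔ Subgroup.zpowers (z : G)) (M.bas H) =
            fixedCard H (K ⊔ Subgroup.zpowers (z : G)) := fun z => M.mark_bas _ _
      rw [Finset.sum_congr rfl fun z _ => this z]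
      exact key_dvd H K
    | zero => simp
    | add x y hx hy ihx ihy =>
      simpa [map_add, Finset.sum_add_distrib] using dvd_add ihx ihy
    | smul c x hx ih =>
      have : ∀ z : Subgroup.center G,
          M.mark (K ⊔ Subgroup.zpowers (z : G)) (c • x) =
            c * M.mark (K ⊔ Subgroup.zpowers (z : G)) x := by
        intro z
        rw [map_zsmul, smul_eq_mul]
      rw [Finset.sum_congr rfl fun z _ => this z, ← Finset.mul_sum]
      exact Dvd.dvd.mul_left ih c
  -- Step 2: marks of a are 1
  have hmark : ∀ K : Subgroup G, M.mark K a = 1 := by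
    intro K
    have hu : IsUnit (M.mark K a) := ha.map (M.mark K)
    have hsum := key K a
    -- split off z = 1
    have hsplit : ∑ z : Subgroup.center G, M.mark (K ⊔ Subgroup.zpowers (z : G)) a
        = M.mark K a + (N - 1) := by
      rw [← Finset.sum_erase_add Finset.univ _ (Finset.mem_univ (1 : Subgroup.center G))]
      have h1' : ∀ z ∈ Finset.univ.erase (1 : Subgroup.center G),
          M.mark (K ⊔ Subgroup.zpowers (z : G)) a = 1 := by
        intro z hz
        have hz1 : z ≠ 1 := (Finset.mem_erase.mp hz).1
        apply h1
        intro hbot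
        have hle : Subgroup.zpowers (z : G) ≤ (K ⊔ Subgroup.zpowers (z : G)) ⊓ Subgroup.center G :=
          le_inf le_sup_right (Subgroup.zpowers_le.mpr z.2)
        rw [hbot, le_bot_iff, Subgroup.zpowers_eq_bot] at hle
        exact hz1 (Subtype.ext hle)
      rw [Finset.sum_congr rfl h1']
      have hcard : (Finset.univ.erase (1 : Subgroup.center G)).card
          = Fintype.card (Subgroup.center G) - 1 := by
        rw [Finset.card_erase_of_mem (Finset.mem_univ _), Finset.card_univ]
      have hsup : K ⊔ Subgroup.zpowers ((1 : Subgroup.center G) : G) = K := by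
        simp
      rw [Finset.sum_const, hcard, hsup, hN, Nat.card_eq_fintype_card]
      have hpos : 1 ≤ Fintype.card (Subgroup.center G) := Fintype.card_pos
      rw [nsmul_eq_mul, mul_one, Nat.cast_sub hpos]
      push_cast
      ring
    rw [hsplit] at hsum
    have h2 : N ∣ M.mark K a - 1 := by
      have h := dvd_sub hsum (dvd_refl N)
      have e : M.mark K a + (N - 1) - N = M.mark K a - 1 := by ring
      rwa [e] at h
    rcases Int.isUnit_iff.mp hu with h | h
    · exact h
    · exfalso
      rw [h] at h2
      have : N ∣ 2 := by
        have : (-1 : ℤ) - 1 = -2 := by ring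
        rw [this] at h2
        exact (dvd_neg.mp h2)
      have hle := Int.le_of_dvd (by norm_num) this
      have : (2 : ℤ) < N := by rw [hN]; exact_mod_cast hZ
      omega
  apply M.mark_injective
  intro H
  rw [hmark H, map_one]
end

section
/- Let P be a finite 2-group of order at least 4 such that every nontrivial subgroup H of P with H ∩ Z(P) = 1 has order 2. If |P| ≥ 2·|F_P|, where F_P is the set of subgroups H ≤ P with H ∩ Z(P) = 1, then the faithful part ∂B^×(P) is trivial. -/
section Aux

variable {P : Type} [Group P] [Fintype P]

lemma aux_normal_of_le_center {N : Subgroup P} (h : N ≤ Subgroup.center P) : N.Normal := by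
  constructor
  intro n hn g
  have hc : g * n = n * g := Subgroup.mem_center_iff.mp (h hn) g
  have : g * n * g⁻¹ = n := by rw [hc, mul_assoc, mul_inv_cancel, mul_one]
  rw [this]; exact hn

/-- Two non-identity elements of a subgroup of order two coincide. -/
lemma aux_two_elt {H : Subgroup P} (h2 : Nat.card H = 2) {x y : P}
    (hx : x ∈ H) (hy : y ∈ H) (hx1 : x ≠ 1) (hy1 : y ≠ 1) : x = y := by
  obtain ⟨u, hu, huniq⟩ := (Nat.card_eq_two_iff' (1 : H)).mp h2
  have hxu : (⟨x, hx⟩ : H) = u := huniq _ (by simpa [Subtype.ext_iff] using hx1)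
  have hyu : (⟨y, hy⟩ : H) = u := huniq _ (by simpa [Subtype.ext_iff] using hy1)
  have := hxu.trans hyu.symm
  simpa [Subtype.ext_iff] using this

lemma aux_mem_zpowers_of_sq {t x : P} (ht : t * t = 1) (hx : x ∈ Subgroup.zpowers t) :
    x = 1 ∨ x = t := by
  obtain ⟨n, rfl⟩ := hx
  have ht2 : t ^ (2 : ℤ) = 1 := by
    rw [show (2 : ℤ) = 1 + 1 by norm_num, zpow_add, zpow_one, ht]
  have key : t ^ n = t ^ (n % 2) := by
    conv_lhs => rw [← Int.mul_ediv_add_emod n 2]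
    rw [zpow_add, zpow_mul, ht2, one_zpow, one_mul]
  rcases Int.emod_two_eq n with h | h
  · left; show t ^ n = 1; rw [key, h, zpow_zero]
  · right; show t ^ n = t; rw [key, h, zpow_one]

lemma aux_inf_center_eq_bot {t : P} (ht : t * t = 1) (htZ : t ∉ Subgroup.center P) :
    Subgroup.zpowers t ⊓ Subgroup.center P = ⊥ := by
  rw [Subgroup.eq_bot_iff_forall]
  rintro x ⟨hx1, hx2⟩
  rcases aux_mem_zpowers_of_sq ht hx1 with rfl | rfl
  · rfl
  · exact absurd hx2 htZ

/-- The key congruence: summing the marks of `a` over the cyclic subgroups generated by the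
images of a finite group `K` under a homomorphism is divisible by `|K|` (Burnside's lemma). -/
lemma aux_mark_sum_dvd (M : BurnsideModel P) (a : M.carrier)
    (K : Type) [Group K] [Fintype K] (φ : K →* P) :
    ((Fintype.card K : ℤ)) ∣ ∑ v : K, M.mark (Subgroup.zpowers (φ v)) a := by
  classical
  let ψ : M.carrier →ₗ[ℤ] ℤ :=
    (∑ v : K, (M.mark (Subgroup.zpowers (φ v))).toAddMonoidHom).toIntLinearMap
  have hψ : ∀ x, ψ x = ∑ v : K, M.mark (Subgroup.zpowers (φ v)) x := by
    intro x
    simp [ψ, AddMonoidHom.toIntLinearMap, AddMonoidHom.finset_sum_apply]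
  have hb : ∀ H : Subgroup P, ψ (M.bas H) ∈ Ideal.span {(Fintype.card K : ℤ)} := by
    intro H
    rw [Ideal.mem_span_singleton, hψ]
    letI : MulAction K (P ⧸ H) := MulAction.compHom _ φ
    letI : Fintype (P ⧸ H) := Fintype.ofFinite _
    letI : ∀ v : K, Fintype (MulAction.fixedBy (P ⧸ H) v) := fun v => Fintype.ofFinite _
    letI : Fintype (Quotient (MulAction.orbitRel K (P ⧸ H))) := Fintype.ofFinite _
    have key : ∀ v : K, M.mark (Subgroup.zpowers (φ v)) (M.bas H)
        = (Fintype.card (MulAction.fixedBy (P ⧸ H) v) : ℤ) := by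
      intro v
      rw [M.mark_bas]
      unfold fixedCard
      rw [← Nat.card_eq_fintype_card]
      congr 1
      apply Nat.card_congr
      apply Equiv.subtypeEquivRight
      intro x
      constructor
      · intro h
        exact h (φ v) (Subgroup.mem_zpowers _)
      · intro h k hk
        have h' : φ v • x = x := h
        have hst : Subgroup.zpowers (φ v) ≤ MulAction.stabilizer P x :=
          Subgroup.zpowers_le.mpr h'
        exact hst hk
    have hsum := MulAction.sum_card_fixedBy_eq_card_orbits_mul_card_group K (P ⧸ H)
    have heq : ∑ v : K, M.mark (Subgroup.zpowers (φ v)) (M.bas H)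
        = (Fintype.card K : ℤ) * (Fintype.card (Quotient (MulAction.orbitRel K (P ⧸ H))) : ℤ) := by
      calc ∑ v : K, M.mark (Subgroup.zpowers (φ v)) (M.bas H)
          = ((∑ v : K, Fintype.card (MulAction.fixedBy (P ⧸ H) v) : ℕ) : ℤ) := by
            push_cast
            exact Finset.sum_congr rfl fun v _ => key v
        _ = ((Fintype.card (Quotient (MulAction.orbitRel K (P ⧸ H))) * Fintype.card K : ℕ) : ℤ) := by
            rw [hsum]
        _ = (Fintype.card K : ℤ) * (Fintype.card (Quotient (MulAction.orbitRel K (P ⧸ H))) : ℤ) := by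
            push_cast
            ring
    exact ⟨_, heq⟩
  have hle : Submodule.span ℤ (Set.range M.bas) ≤
      Submodule.comap ψ (Ideal.span {(Fintype.card K : ℤ)}) := by
    rw [Submodule.span_le]
    rintro _ ⟨H, rfl⟩
    exact hb H
  have := hle (M.bas_span a)
  rw [Submodule.mem_comap, Ideal.mem_span_singleton] at this
  rwa [hψ] at this

/-- The homomorphism from `Multiplicative (ZMod 2)` determined by an involution. -/
def invHom (t : P) (ht : t * t = 1) : Multiplicative (ZMod 2) →* P where
  toFun x := t ^ (Multiplicative.toAdd x).val
  map_one' := by simp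
  map_mul' x y := by
    have ht2 : t ^ 2 = 1 := by rw [pow_two]; exact ht
    have hpow : ∀ n : ℕ, t ^ (n % 2) = t ^ n := by
      intro n
      conv_rhs => rw [← Nat.div_add_mod n 2]
      rw [pow_add, pow_mul, ht2, one_pow, one_mul]
    have hval : (Multiplicative.toAdd (x * y)).val
        = ((Multiplicative.toAdd x).val + (Multiplicative.toAdd y).val) % 2 := by
      rw [toAdd_mul, ZMod.val_add]
    show t ^ (Multiplicative.toAdd (x * y)).val
        = t ^ (Multiplicative.toAdd x).val * t ^ (Multiplicative.toAdd y).val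
    rw [hval, hpow, pow_add]

@[simp] lemma invHom_one (t : P) (ht : t * t = 1) :
    invHom t ht (Multiplicative.ofAdd 0) = 1 := by
  simp [invHom]

@[simp] lemma invHom_t (t : P) (ht : t * t = 1) :
    invHom t ht (Multiplicative.ofAdd 1) = t := by
  have : ((1 : ZMod 2)).val = 1 := rfl
  simp [invHom, this]

lemma sum_mult2 (f : Multiplicative (ZMod 2) → ℤ) :
    ∑ x : Multiplicative (ZMod 2), f x
      = f (Multiplicative.ofAdd 0) + f (Multiplicative.ofAdd 1) := by
  have huniv : (Finset.univ : Finset (Multiplicative (ZMod 2)))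
      = {Multiplicative.ofAdd 0, Multiplicative.ofAdd 1} := by decide
  rw [huniv, Finset.sum_insert (by decide), Finset.sum_singleton]

end Aux

/-- Let `P` be a finite `2`-group of order at least `4` such that every nontrivial
subgroup meeting the centre trivially has order `2`. If `|P| ≥ 2|F_P|`, where `F_P`
is the set of subgroups meeting the centre trivially, then the faithful part of
`B^×(P)` is trivial (a unit whose deflation to every proper quotient is the identity
— i.e. whose marks equal `1` on all subgroups containing a nontrivial normal
subgroup — is the identity). -/
theorem stmt6 {P : Type} [Group P] [Fintype P] (hP : IsPGroup 2 P)
    (hcard : 4 ≤ Fintype.card P)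
    (hmax : ∀ H : Subgroup P, H ≠ ⊥ → H ⊓ Subgroup.center P = ⊥ → Nat.card H = 2)
    (hF : 2 * Nat.card {H : Subgroup P // H ⊓ Subgroup.center P = ⊥} ≤ Fintype.card P)
    (M : BurnsideModel P) (a : M.carrier) (ha : IsUnit a)
    (hfa : ∀ N : Subgroup P, N.Normal → N ≠ ⊥ → ∀ H : Subgroup P, N ≤ H → M.mark H a = 1) :
    a = 1 := by
  classical
  set Z := Subgroup.center P with hZ
  -- marks of a unit are ±1
  have hpm : ∀ H : Subgroup P, M.mark H a = 1 ∨ M.mark H a = -1 := by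
    intro H
    exact Int.isUnit_iff.mp (ha.map (M.mark H))
  -- marks are 1 on subgroups meeting the centre
  have hone : ∀ H : Subgroup P, H ⊓ Z ≠ ⊥ → M.mark H a = 1 := by
    intro H hH
    exact hfa (H ⊓ Z) (aux_normal_of_le_center inf_le_right) hH H inf_le_left
  -- order-two generation facts
  have hzp2 : ∀ g : P, g ≠ 1 → Subgroup.zpowers g ⊓ Z = ⊥ → Nat.card (Subgroup.zpowers g) = 2 :=
    fun g hg h => hmax _ (Subgroup.zpowers_ne_bot.mpr hg) h
  have hsq : ∀ g : P, g ≠ 1 → Subgroup.zpowers g ⊓ Z = ⊥ → g * g = 1 := by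
    intro g hg h
    by_contra hgg
    have h2 := hzp2 g hg h
    have : g * g = g := aux_two_elt h2 (Subgroup.mul_mem _ (Subgroup.mem_zpowers g)
      (Subgroup.mem_zpowers g)) (Subgroup.mem_zpowers g) hgg hg
    exact hg (mul_left_cancel (this.trans (mul_one g).symm))
  -- the set of elements generating subgroups in F_P
  set T : Finset P := Finset.univ.filter (fun g => Subgroup.zpowers g ⊓ Z = ⊥) with hT
  have hmemT : ∀ g : P, g ∈ T ↔ Subgroup.zpowers g ⊓ Z = ⊥ := by
    intro g; rw [hT, Finset.mem_filter]; simp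
  have h1T : (1 : P) ∈ T := by
    rw [hmemT, Subgroup.zpowers_one_eq_bot]
    exact bot_inf_eq _
  -- T injects into F_P
  have hTF : T.card ≤ Nat.card {H : Subgroup P // H ⊓ Z = ⊥} := by
    have : T.card = Nat.card {g : P // g ∈ T} := by
      rw [Nat.card_eq_fintype_card, Fintype.card_coe]
    rw [this]
    apply Nat.card_le_card_of_injective
      (f := fun g => (⟨Subgroup.zpowers g.1, (hmemT g.1).mp g.2⟩ :
        {H : Subgroup P // H ⊓ Z = ⊥}))
    rintro ⟨x, hx⟩ ⟨y, hy⟩ hxy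
    simp only [Subtype.mk.injEq] at hxy ⊢
    by_cases hx1 : x = 1
    · subst hx1
      rw [Subgroup.zpowers_one_eq_bot] at hxy
      have := hxy.symm
      rw [Subgroup.zpowers_eq_bot] at this
      exact this.symm
    · by_cases hy1 : y = 1
      · subst hy1
        rw [Subgroup.zpowers_one_eq_bot, Subgroup.zpowers_eq_bot] at hxy
        exact hxy
      · have h2 : Nat.card (Subgroup.zpowers x) = 2 :=
          hzp2 x hx1 (Finset.mem_filter.mp hx).2
        have hymem : y ∈ Subgroup.zpowers x := hxy ▸ Subgroup.mem_zpowers y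
        exact aux_two_elt h2 (Subgroup.mem_zpowers x) hymem hx1 hy1
  -- the divisibility from Burnside over the whole group
  have hdvd : (Fintype.card P : ℤ) ∣ ∑ g : P, M.mark (Subgroup.zpowers g) a := by
    simpa using aux_mark_sum_dvd M a P (MonoidHom.id P)
  -- the defect sum
  set D : ℤ := ∑ g ∈ T, (1 - M.mark (Subgroup.zpowers g) a) with hD
  have hsum_split : ∑ g : P, M.mark (Subgroup.zpowers g) a = (Fintype.card P : ℤ) - D := by
    have : ∑ g : P, (1 - M.mark (Subgroup.zpowers g) a) = D := by
      rw [hD]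
      symm
      apply Finset.sum_subset (Finset.subset_univ T)
      intro g _ hg
      have : Subgroup.zpowers g ⊓ Z ≠ ⊥ := fun h => hg ((hmemT g).mpr h)
      rw [hone _ this]; ring
    have hcount : ∑ g : P, (1 : ℤ) = (Fintype.card P : ℤ) := by
      simp
    calc ∑ g : P, M.mark (Subgroup.zpowers g) a
        = ∑ g : P, ((1 : ℤ) - (1 - M.mark (Subgroup.zpowers g) a)) := by
          apply Finset.sum_congr rfl; intros; ring
      _ = (∑ g : P, (1:ℤ)) - ∑ g : P, (1 - M.mark (Subgroup.zpowers g) a) :=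
          Finset.sum_sub_distrib _ _
      _ = (Fintype.card P : ℤ) - D := by rw [hcount, this]
  have hDnonneg : 0 ≤ D := by
    apply Finset.sum_nonneg
    intro g _
    rcases hpm (Subgroup.zpowers g) with h | h <;> rw [h] <;> norm_num
  have hDle : D ≤ 2 * T.card := by
    calc D ≤ ∑ _g ∈ T, (2 : ℤ) := by
          apply Finset.sum_le_sum
          intro g _
          rcases hpm (Subgroup.zpowers g) with h | h <;> rw [h] <;> norm_num
      _ = 2 * T.card := by rw [Finset.sum_const]; push_cast; ring
  have hDcard : D ≤ (Fintype.card P : ℤ) := by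
    calc D ≤ 2 * T.card := hDle
      _ ≤ 2 * (Nat.card {H : Subgroup P // H ⊓ Z = ⊥} : ℤ) := by
          have := hTF; push_cast; omega
      _ ≤ (Fintype.card P : ℤ) := by exact_mod_cast hF
  -- card P divides D
  have hdvdD : (Fintype.card P : ℤ) ∣ D := by
    have : D = (Fintype.card P : ℤ) - ∑ g : P, M.mark (Subgroup.zpowers g) a := by
      rw [hsum_split]; ring
    rw [this]
    exact dvd_sub (dvd_refl _) hdvd
  have hPpos : (0 : ℤ) < Fintype.card P := by exact_mod_cast Fintype.card_pos
  have hD01 : D = 0 ∨ D = (Fintype.card P : ℤ) := by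
    obtain ⟨k, hk⟩ := hdvdD
    have hk0 : 0 ≤ k := by nlinarith
    have hk1 : k ≤ 1 := by nlinarith
    interval_cases k
    · left; simpa using hk
    · right; simpa using hk
  rcases hD01 with hD0 | hDP
  · -- all marks on T are 1, hence a = 1
    have hall : ∀ g ∈ T, M.mark (Subgroup.zpowers g) a = 1 := by
      intro g hg
      have := (Finset.sum_eq_zero_iff_of_nonneg (fun g _ => by
        rcases hpm (Subgroup.zpowers g) with h | h <;> rw [h] <;> norm_num)).mp hD0 g hg
      linarith
    apply M.mark_injective
    intro H
    rw [map_one]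
    by_cases hHZ : H ⊓ Z = ⊥
    · by_cases hHbot : H = ⊥
      · subst hHbot
        rw [← Subgroup.zpowers_one_eq_bot]
        exact hall 1 h1T
      · obtain ⟨⟨g, hgH⟩, hg1⟩ := Subgroup.ne_bot_iff_exists_ne_one.mp hHbot
        have hg1' : g ≠ 1 := by simpa [Subtype.ext_iff] using hg1
        have h2 : Nat.card H = 2 := hmax H hHbot hHZ
        have hHzp : H = Subgroup.zpowers g := by
          apply le_antisymm
          · intro x hx
            by_cases hx1 : x = 1
            · subst hx1; exact Subgroup.one_mem _
            · have : x = g := aux_two_elt h2 hx hgH hx1 hg1'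
              subst this; exact Subgroup.mem_zpowers x
          · exact Subgroup.zpowers_le.mpr hgH
        rw [hHzp]
        apply hall
        rw [hmemT, ← hHzp]
        exact hHZ
    · exact hone H hHZ
  · -- all marks on T are -1; derive a contradiction via the Klein four-group
    exfalso
    have hall : ∀ g ∈ T, M.mark (Subgroup.zpowers g) a = -1 := by
      intro g hg
      have h2T : (2 : ℤ) * T.card ≤ D := by
        rw [hDP]
        calc (2 : ℤ) * T.card ≤ 2 * (Nat.card {H : Subgroup P // H ⊓ Z = ⊥} : ℤ) := by
              have := hTF; push_cast; omega
          _ ≤ (Fintype.card P : ℤ) := by exact_mod_cast hF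
      -- each term equals 2
      have hzero : ∑ g ∈ T, ((2 : ℤ) - (1 - M.mark (Subgroup.zpowers g) a)) = 0 := by
        have hsum2 : ∑ _g ∈ T, (2 : ℤ) = 2 * T.card := by
          rw [Finset.sum_const]; push_cast; ring
        rw [Finset.sum_sub_distrib, hsum2, ← hD]
        omega
      have := (Finset.sum_eq_zero_iff_of_nonneg (fun g _ => by
        rcases hpm (Subgroup.zpowers g) with h | h <;> rw [h] <;> norm_num)).mp hzero g hg
      linarith
    -- there is a nonidentity element of T
    have hT2 : 2 ≤ T.card := by
      have h2T : (2 : ℤ) * T.card = D := by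
        have hle2 : (2:ℤ) * T.card ≤ (Fintype.card P : ℤ) := by
          calc (2 : ℤ) * T.card ≤ 2 * (Nat.card {H : Subgroup P // H ⊓ Z = ⊥} : ℤ) := by
                have := hTF; push_cast; omega
            _ ≤ (Fintype.card P : ℤ) := by exact_mod_cast hF
        have : D ≤ 2 * T.card := hDle
        omega
      have : (4 : ℤ) ≤ Fintype.card P := by exact_mod_cast hcard
      omega
    obtain ⟨g, hgT, hg1⟩ := Finset.exists_mem_ne (show 1 < T.card by omega) (1 : P)
    have hgF : Subgroup.zpowers g ⊓ Z = ⊥ := (hmemT g).mp hgT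
    have hg2 : g * g = 1 := hsq g hg1 hgF
    have hgZ : g ∉ Z := by
      intro hg
      have : g ∈ Subgroup.zpowers g ⊓ Z := ⟨Subgroup.mem_zpowers g, hg⟩
      rw [hgF] at this
      exact hg1 this
    -- central involution
    have : Nontrivial P := Fintype.one_lt_card_iff_nontrivial.mp (by omega)
    have hZnt : Nontrivial Z := hP.center_nontrivial
    haveI : Fact (Nat.Prime 2) := ⟨Nat.prime_two⟩
    obtain ⟨n, hn⟩ := (IsPGroup.iff_card (p := 2) (G := Z)).mp (hP.to_subgroup Z)
    have hn1 : 1 ≤ n := by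
      rcases Nat.eq_zero_or_pos n with h0 | h1
      · exfalso
        rw [h0, pow_zero] at hn
        exact ((Finite.one_lt_card_iff_nontrivial (α := Z)).mpr hZnt).ne' hn
      · exact h1
    obtain ⟨z', hz'⟩ := exists_prime_orderOf_dvd_card' (G := Z) 2
      (by rw [hn]; exact dvd_pow_self 2 (by omega))
    set z : P := (z' : P) with hzdef
    have hzZ : z ∈ Z := z'.2
    have hz1 : z ≠ 1 := by
      intro h
      have : z' = 1 := by ext; exact h
      rw [this, orderOf_one] at hz'
      norm_num at hz'
    have hz2 : z * z = 1 := by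
      have : z' ^ 2 = 1 := by rw [← hz']; exact pow_orderOf_eq_one z'
      have : ((z' ^ 2 : Z) : P) = ((1 : Z) : P) := by rw [this]
      simpa [pow_two] using this
    -- z and g commute, z ≠ g
    have hcomm : g * z = z * g := (Subgroup.mem_center_iff.mp hzZ g)
    have hzg2 : (z * g) * (z * g) = 1 := by
      have h1 : (z * g) * (z * g) = z * (g * z) * g := by group
      rw [h1, hcomm]
      calc z * (z * g) * g = (z * z) * (g * g) := by group
        _ = 1 := by rw [hz2, hg2, one_mul]
    have hzgZ : z * g ∉ Z := by
      intro h
      exact hgZ (by simpa using Subgroup.mul_mem Z (Subgroup.inv_mem Z hzZ) h)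
    have hzgF : Subgroup.zpowers (z * g) ⊓ Z = ⊥ := aux_inf_center_eq_bot hzg2 hzgZ
    have hzgT : z * g ∈ T := (hmemT _).mpr hzgF
    -- marks
    have hmark1 : M.mark (Subgroup.zpowers (1 : P)) a = -1 := hall 1 h1T
    have hmarkg : M.mark (Subgroup.zpowers g) a = -1 := hall g hgT
    have hmarkzg : M.mark (Subgroup.zpowers (z * g)) a = -1 := hall _ hzgT
    have hmarkz : M.mark (Subgroup.zpowers z) a = 1 := by
      apply hone
      intro h
      apply hz1
      have : z ∈ Subgroup.zpowers z ⊓ Z := ⟨Subgroup.mem_zpowers z, hzZ⟩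
      rw [h] at this
      exact this
    -- the Klein four-group congruence
    have hcommK : ∀ (m n : Multiplicative (ZMod 2)),
        Commute ((invHom z hz2) m) ((invHom g hg2) n) := by
      intro m n
      have hc : Commute z g := (Subgroup.mem_center_iff.mp hzZ g).symm
      show Commute (z ^ (Multiplicative.toAdd m).val) (g ^ (Multiplicative.toAdd n).val)
      exact hc.pow_pow _ _
    have hK := aux_mark_sum_dvd M a (Multiplicative (ZMod 2) × Multiplicative (ZMod 2))
      ((invHom z hz2).noncommCoprod (invHom g hg2) hcommK)
    have hcard4 : (Fintype.card (Multiplicative (ZMod 2) × Multiplicative (ZMod 2)) : ℤ)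
        = 4 := by
      rw [Fintype.card_prod]
      norm_num
    rw [hcard4] at hK
    have hsum : ∑ v : Multiplicative (ZMod 2) × Multiplicative (ZMod 2),
        M.mark (Subgroup.zpowers (((invHom z hz2).noncommCoprod (invHom g hg2) hcommK) v)) a
          = -2 := by
      rw [Fintype.sum_prod_type]
      rw [sum_mult2]
      rw [sum_mult2, sum_mult2]
      simp only [MonoidHom.noncommCoprod_apply, invHom_one, invHom_t, one_mul, mul_one]
      rw [hmark1, hmarkg, hmarkz, hmarkzg]
      norm_num
    rw [hsum] at hK
    omega
end

section
/- If P is a finite abelian 2-group of order at least 3, then the faithful part ∂B^×(P) of the unit group of its Burnside ring is trivial. -/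
/-- The mark of `[G/H]` at a cyclic subgroup `⟨g⟩` is the number of points of `G ⧸ H`
fixed by `g`. -/
lemma fixedCard_zpowers {P : Type} [CommGroup P] [Fintype P] (H : Subgroup P) (g : P) :
    fixedCard H (Subgroup.zpowers g) = (Nat.card (MulAction.fixedBy (P ⧸ H) g) : ℤ) := by
  unfold fixedCard
  congr 1
  apply Nat.card_congr
  apply Equiv.subtypeEquivRight
  intro x
  constructor
  · intro h; exact h g (Subgroup.mem_zpowers g)
  · intro h k hk
    have hg : g ∈ MulAction.stabilizer P x := h
    exact (Subgroup.zpowers_le.mpr hg) hk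

/-- Burnside's lemma gives the Dress congruence at the trivial subgroup for basis
elements. -/
lemma burnside_dvd {P : Type} [CommGroup P] [Fintype P] (H : Subgroup P) :
    (Fintype.card P : ℤ) ∣ ∑ g : P, fixedCard H (Subgroup.zpowers g) := by
  have hf : Finite (P ⧸ H) := Quotient.finite _
  have : Fintype (P ⧸ H) := Fintype.ofFinite _
  classical
  have hb := MulAction.sum_card_fixedBy_eq_card_orbits_mul_card_group P (P ⧸ H)
  have hc : ∑ g : P, fixedCard H (Subgroup.zpowers g)
      = (Fintype.card P : ℤ) * (Fintype.card (Quotient (MulAction.orbitRel P (P ⧸ H))) : ℤ) := by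
    rw [show ∑ g : P, fixedCard H (Subgroup.zpowers g)
        = ((∑ g : P, Fintype.card (MulAction.fixedBy (P ⧸ H) g) : ℕ) : ℤ) by
      push_cast [fixedCard_zpowers, Nat.card_eq_fintype_card]; rfl]
    rw [hb]; push_cast; ring
  rw [hc]; exact Dvd.intro _ rfl

/-- The Dress congruence at the trivial subgroup, for all elements of the model. -/
lemma dress_dvd {P : Type} [CommGroup P] [Fintype P] (M : BurnsideModel P) (b : M.carrier) :
    (Fintype.card P : ℤ) ∣ ∑ g : P, M.mark (Subgroup.zpowers g) b := by
  refine Submodule.span_induction (p := fun b _ =>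
      (Fintype.card P : ℤ) ∣ ∑ g : P, M.mark (Subgroup.zpowers g) b) ?_ ?_ ?_ ?_ (M.bas_span b)
  · rintro x ⟨H, rfl⟩
    simpa [M.mark_bas] using burnside_dvd H
  · simp
  · intro x y _ _ hx hy
    simpa [map_add, Finset.sum_add_distrib] using dvd_add hx hy
  · intro z x _ hx
    have : ∑ g : P, M.mark (Subgroup.zpowers g) (z • x)
        = z * ∑ g : P, M.mark (Subgroup.zpowers g) x := by
      rw [Finset.mul_sum]
      exact Finset.sum_congr rfl fun g _ => by
        simpa using map_zsmul (M.mark (Subgroup.zpowers g)) z x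
    rw [this]
    exact Dvd.dvd.mul_left hx z

/-- If `P` is a finite abelian `2`-group of order at least `3`, then the faithful part
`∂B^×(P)` of the unit group of its Burnside ring is trivial. -/
theorem stmt7 {P : Type} [CommGroup P] [Fintype P] (hP : IsPGroup 2 P)
    (hcard : 3 ≤ Fintype.card P)
    (M : BurnsideModel P) (a : M.carrier) (ha : IsUnit a)
    (hfa : ∀ N : Subgroup P, N.Normal → N ≠ ⊥ → ∀ H : Subgroup P, N ≤ H → M.mark H a = 1) :
    a = 1 := by
  classical
  -- every mark at a nontrivial subgroup equals 1
  have hmark : ∀ H : Subgroup P, H ≠ ⊥ → M.mark H a = 1 := fun H hH =>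
    hfa H inferInstance hH H le_rfl
  -- the sum of marks at cyclic subgroups
  have hdvd := dress_dvd M a
  have hsum : ∑ g : P, M.mark (Subgroup.zpowers g) a
      = M.mark ⊥ a + ((Fintype.card P - 1 : ℕ) : ℤ) := by
    rw [← Finset.add_sum_erase Finset.univ _ (Finset.mem_univ (1 : P))]
    have h1 : Subgroup.zpowers (1 : P) = ⊥ := Subgroup.zpowers_one_eq_bot
    rw [h1]
    congr 1
    rw [Finset.sum_congr rfl (fun g hg => hmark (Subgroup.zpowers g)
      (fun hb => (Finset.mem_erase.mp hg).1 (Subgroup.zpowers_eq_bot.mp hb)))]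
    simp [Finset.card_erase_of_mem]
  rw [hsum] at hdvd
  -- the mark at ⊥ is ±1
  have hu : IsUnit (M.mark ⊥ a) := ha.map (M.mark ⊥)
  have hbot : M.mark ⊥ a = 1 := by
    rcases Int.isUnit_iff.mp hu with h | h
    · exact h
    · exfalso
      rw [h] at hdvd
      have h2 : (Fintype.card P : ℤ) ∣ 2 := by
        have hc1 : ((Fintype.card P - 1 : ℕ) : ℤ) = (Fintype.card P : ℤ) - 1 := by
          have : 1 ≤ Fintype.card P := Fintype.card_pos
          omega
        have : (-1 : ℤ) + ((Fintype.card P - 1 : ℕ) : ℤ)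
            = (Fintype.card P : ℤ) - 2 := by rw [hc1]; ring
        rw [this] at hdvd
        have h3 := dvd_sub (dvd_refl (Fintype.card P : ℤ)) hdvd
        rw [show (Fintype.card P : ℤ) - ((Fintype.card P : ℤ) - 2) = 2 by ring] at h3
        exact h3
      have := Int.le_of_dvd (by norm_num) h2
      have : (3 : ℤ) ≤ (Fintype.card P : ℤ) := by exact_mod_cast hcard
      omega
  -- conclude by injectivity of the marks
  apply M.mark_injective
  intro H
  rw [map_one]
  by_cases h : H = ⊥
  · rw [h]; exact hbot
  · exact hmark H h
end

section
/- If P is a generalized quaternion 2-group, then the faithful part ∂B^×(P) of the unit group of its Burnside ring is trivial. -/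
open MulAction in
/-- The `⟨g⟩`-fixed points on `G ⧸ K` are the points fixed by `g`. -/
lemma fixedCard_zpowers_s8 {G : Type} [Group G] (K : Subgroup G) (g : G) :
    fixedCard K (Subgroup.zpowers g) = (Nat.card (fixedBy (G ⧸ K) g) : ℤ) := by
  unfold fixedCard
  congr 1
  apply Nat.card_congr
  apply Equiv.subtypeEquivRight
  intro x
  constructor
  · intro h; exact h g (Subgroup.mem_zpowers g)
  · intro h k hk
    have : Subgroup.zpowers g ≤ stabilizer G x := by
      rw [Subgroup.zpowers_le]; exact h
    exact this hk

open MulAction in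
/-- Burnside's lemma applied to the transitive action on `G ⧸ K`. -/
lemma sum_fixedBy_quotient {G : Type} [Group G] [Fintype G] (K : Subgroup G) :
    ∑ g : G, Nat.card (fixedBy (G ⧸ K) g) = Fintype.card G := by
  classical
  have hss : Subsingleton (Quotient (orbitRel G (G ⧸ K))) := by
    constructor
    rintro ⟨x⟩ ⟨y⟩
    exact Quotient.sound (exists_smul_eq G y x)
  have : Fintype (G ⧸ K) := Fintype.ofFinite _
  have hcard : Fintype.card (Quotient (orbitRel G (G ⧸ K))) = 1 := by
    have hne : Nonempty (Quotient (orbitRel G (G ⧸ K))) := inferInstance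
    exact Fintype.card_eq_one_iff.mpr
      (by obtain ⟨q⟩ := hne; exact ⟨q, fun y => Subsingleton.elim _ _⟩)
  have hb := sum_card_fixedBy_eq_card_orbits_mul_card_group G (G ⧸ K)
  rw [hcard, one_mul] at hb
  rw [← hb]
  congr 1
  ext g
  simp [Nat.card_eq_fintype_card, Set.Finite.fintype]

/-- If `P` is a generalized quaternion `2`-group (a noncyclic `2`-group of order at
least `8` with a unique subgroup of order `2`), then the faithful part `∂B^×(P)` of
the unit group of its Burnside ring is trivial. -/
theorem stmt8 {P : Type} [Group P] [Fintype P] (hP : IsPGroup 2 P)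
    (hcard : 8 ≤ Fintype.card P) (hnc : ¬ IsCyclic P)
    (huniq : ∃! H : Subgroup P, Nat.card H = 2)
    (M : BurnsideModel P) (a : M.carrier) (ha : IsUnit a)
    (hfa : ∀ N : Subgroup P, N.Normal → N ≠ ⊥ → ∀ H : Subgroup P, N ≤ H → M.mark H a = 1) :
    a = 1 := by
  classical
  obtain ⟨Z, hZ, hZuniq⟩ := huniq
  -- Z is normal
  have hZnorm : Z.Normal := by
    constructor
    intro n hn g
    have hmap : Nat.card (Subgroup.map (MulAut.conj g).toMonoidHom Z) = 2 := by
      rw [← hZ]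
      exact Nat.card_congr
        (Subgroup.equivMapOfInjective Z (MulAut.conj g).toMonoidHom
          (MulAut.conj g).injective).symm.toEquiv
    have hmz := hZuniq _ hmap
    rw [← hmz]
    exact ⟨n, hn, rfl⟩
  have hZbot : Z ≠ ⊥ := by
    intro h
    rw [h] at hZ
    simp at hZ
  -- every nontrivial subgroup contains Z
  have hZle : ∀ H : Subgroup P, H ≠ ⊥ → Z ≤ H := by
    intro H hH
    obtain ⟨⟨x, hxH⟩, hx1⟩ := Subgroup.ne_bot_iff_exists_ne_one.mp hH
    have hx1' : x ≠ 1 := by simpa [Subtype.ext_iff] using hx1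
    obtain ⟨k, hk⟩ := hP x
    obtain ⟨m, -, hm⟩ := (Nat.dvd_prime_pow Nat.prime_two).mp (orderOf_dvd_of_pow_eq_one hk)
    have hm1 : 1 ≤ m := by
      rcases Nat.eq_zero_or_pos m with h0 | h
      · rw [h0, pow_zero] at hm; exact absurd (orderOf_eq_one_iff.mp hm) hx1'
      · exact h
    set y := x ^ (2 ^ (m - 1)) with hy
    have hyord : orderOf y = 2 := by
      rw [hy, orderOf_pow_of_dvd (by positivity)
        (by rw [hm]; exact pow_dvd_pow 2 (Nat.sub_le m 1)), hm,
        Nat.pow_div (Nat.sub_le m 1) (by norm_num), Nat.sub_sub_self hm1, pow_one]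
    have hyH : y ∈ H := H.pow_mem hxH _
    have hzp : Subgroup.zpowers y = Z := hZuniq _ (by show Nat.card _ = 2; rw [Nat.card_zpowers, hyord])
    rw [← hzp]
    rwa [Subgroup.zpowers_le]
  -- all marks at nontrivial subgroups are 1
  have hmark1 : ∀ H : Subgroup P, H ≠ ⊥ → M.mark H a = 1 := fun H hH =>
    hfa Z hZnorm hZbot H (hZle H hH)
  -- the mark at ⊥ is a unit of ℤ
  have hunit : M.mark ⊥ a = 1 ∨ M.mark ⊥ a = -1 :=
    Int.isUnit_iff.mp (ha.map (M.mark ⊥))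
  -- divisibility: |P| divides the sum of marks over cyclic subgroups
  have hdvd : (Fintype.card P : ℤ) ∣ ∑ g : P, M.mark (Subgroup.zpowers g) a := by
    let φ : M.carrier →ₗ[ℤ] ℤ :=
      (∑ g : P, (M.mark (Subgroup.zpowers g)).toAddMonoidHom).toIntLinearMap
    have hφ : ∀ x, φ x = ∑ g : P, M.mark (Subgroup.zpowers g) x := by
      intro x
      show (∑ g : P, (M.mark (Subgroup.zpowers g)).toAddMonoidHom) x = _
      rw [AddMonoidHom.finset_sum_apply]
      rfl
    have hspan : Submodule.span ℤ (Set.range M.bas) ≤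
        Submodule.comap φ (Ideal.span {(Fintype.card P : ℤ)}) := by
      rw [Submodule.span_le]
      rintro - ⟨K, rfl⟩
      show M.bas K ∈ Submodule.comap φ (Ideal.span {(Fintype.card P : ℤ)})
      rw [Submodule.mem_comap, Ideal.mem_span_singleton, hφ]
      have : ∑ g : P, M.mark (Subgroup.zpowers g) (M.bas K) = (Fintype.card P : ℤ) := by
        calc ∑ g : P, M.mark (Subgroup.zpowers g) (M.bas K)
            = ∑ g : P, (Nat.card (MulAction.fixedBy (P ⧸ K) g) : ℤ) := by
              refine Finset.sum_congr rfl fun g _ => ?_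
              rw [M.mark_bas, fixedCard_zpowers_s8]
          _ = ((∑ g : P, Nat.card (MulAction.fixedBy (P ⧸ K) g) : ℕ) : ℤ) := by
              push_cast; ring
          _ = (Fintype.card P : ℤ) := by rw [sum_fixedBy_quotient]
      rw [this]
    have := hspan (M.bas_span a)
    simp only [Submodule.mem_comap, Ideal.mem_span_singleton] at this
    rwa [hφ] at this
  -- compute the sum
  have hsum : ∑ g : P, M.mark (Subgroup.zpowers g) a
      = M.mark ⊥ a + (Fintype.card P - 1 : ℤ) := by
    rw [← Finset.add_sum_erase Finset.univ _ (Finset.mem_univ (1 : P))]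
    rw [Subgroup.zpowers_one_eq_bot]
    congr 1
    have : ∀ g ∈ Finset.univ.erase (1 : P), M.mark (Subgroup.zpowers g) a = 1 := by
      intro g hg
      exact hmark1 _ (Subgroup.zpowers_ne_bot.mpr (Finset.ne_of_mem_erase hg))
    rw [Finset.sum_congr rfl this, Finset.sum_const, Finset.card_erase_of_mem (Finset.mem_univ _),
      Finset.card_univ, nsmul_eq_mul, mul_one]
    have : 1 ≤ Fintype.card P := Fintype.card_pos
    push_cast [Nat.cast_sub this]
    ring
  -- conclude mark ⊥ a = 1
  have hbot : M.mark ⊥ a = 1 := by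
    rcases hunit with h | h
    · exact h
    · exfalso
      rw [hsum, h] at hdvd
      have : (Fintype.card P : ℤ) ∣ (Fintype.card P : ℤ) - 2 := by
        convert hdvd using 1; ring
      have h2 : (Fintype.card P : ℤ) ∣ 2 := by
        have := dvd_sub (dvd_refl (Fintype.card P : ℤ)) this
        simpa using this
      have := Int.le_of_dvd (by norm_num) h2
      omega
  -- all marks agree with those of 1
  apply M.mark_injective
  intro H
  rw [map_one]
  rcases eq_or_ne H ⊥ with rfl | hH
  · exact hbot
  · exact hmark1 H hH
end

section
/- Let P be a dihedral 2-group of order at least 16, Z its center (of order 2), and I, J representatives of the two conjugacy classes of non-central subgroups of order 2. Then the element a = [P/P] + [P/1] − [P/I] − [P/J] is a unit of the Burnside ring B(P), and the faithful part ∂B^×(P) equals {[P/P], a}, a group of order 2. -/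
section aux
variable {G : Type} [Group G]

lemma fixed_iff (H K : Subgroup G) (g : G) :
    (∀ k ∈ K, k • (g : G ⧸ H) = g) ↔ ∀ k ∈ K, g⁻¹ * k * g ∈ H := by
  constructor
  · intro h k hk
    have := h k⁻¹ (K.inv_mem hk)
    rw [MulAction.Quotient.smul_mk, QuotientGroup.eq] at this
    simpa [mul_assoc] using this
  · intro h k hk
    rw [MulAction.Quotient.smul_mk, QuotientGroup.eq]
    have := h k⁻¹ (K.inv_mem hk)
    simpa [mul_assoc] using this

lemma map_conj_conj (K : Subgroup G) (a b : G) :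
    (K.map (MulAut.conj a).toMonoidHom).map (MulAut.conj b).toMonoidHom
      = K.map (MulAut.conj (b*a)).toMonoidHom := by
  rw [Subgroup.map_map]
  congr 1
  ext x
  simp [MulAut.conj_apply, mul_assoc]

lemma map_conj_one (K : Subgroup G) :
    K.map (MulAut.conj (1 : G)).toMonoidHom = K := by
  ext x
  simp [MulAut.conj_apply]

lemma mem_map_conj (K : Subgroup G) (a x : G) :
    x ∈ K.map (MulAut.conj a).toMonoidHom ↔ a⁻¹ * x * a ∈ K := by
  constructor
  · rintro ⟨k, hk, rfl⟩
    simpa [MulAut.conj_apply, mul_assoc] using hk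
  · intro h
    exact ⟨a⁻¹ * x * a, h, by simp [MulAut.conj_apply, mul_assoc]⟩

lemma card_two_nonid {H : Subgroup G} (hH : Nat.card H = 2) {x y : G}
    (hx : x ∈ H) (hy : y ∈ H) (hx1 : x ≠ 1) (hy1 : y ≠ 1) : x = y := by
  rw [Nat.card_eq_two_iff] at hH
  obtain ⟨a, b, hab, hU⟩ := hH
  have hmem : ∀ c : H, c = a ∨ c = b := by
    intro c
    have : c ∈ ({a, b} : Set H) := hU ▸ Set.mem_univ c
    simpa using this
  have h1 := hmem 1
  have h2 := hmem ⟨x, hx⟩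
  have h3 := hmem ⟨y, hy⟩
  have hx1' : (⟨x, hx⟩ : H) ≠ 1 := by simpa [Subtype.ext_iff] using hx1
  have hy1' : (⟨y, hy⟩ : H) ≠ 1 := by simpa [Subtype.ext_iff] using hy1
  have : (⟨x, hx⟩ : H) = ⟨y, hy⟩ := by
    rcases h2 with h2 | h2 <;> rcases h3 with h3 | h3
    · rw [h2, h3]
    · exfalso
      rcases h1 with h1 | h1
      · exact hx1' (by rw [h2, ← h1])
      · exact hy1' (by rw [h3, ← h1])
    · exfalso
      rcases h1 with h1 | h1
      · exact hy1' (by rw [h3, ← h1])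
      · exact hx1' (by rw [h2, ← h1])
    · rw [h2, h3]
  simpa [Subtype.ext_iff] using this

lemma exists_nonid {K : Subgroup G} (hK : K ≠ ⊥) : ∃ x ∈ K, x ≠ 1 := by
  by_contra h
  push_neg at h
  exact hK (by ext x; simp only [Subgroup.mem_bot]; exact ⟨fun hx => h x hx, by rintro rfl; exact K.one_mem⟩)

lemma eq_of_le_card_two {H K' : Subgroup G} (hH : Nat.card H = 2) (hK' : K' ≠ ⊥)
    (hle : K' ≤ H) : K' = H := by
  obtain ⟨x, hxK, hx1⟩ := exists_nonid hK'
  refine le_antisymm hle ?_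
  intro h hh
  by_cases h1 : h = 1
  · rw [h1]; exact K'.one_mem
  · rw [card_two_nonid hH hh (hle hxK) h1 hx1]; exact hxK

lemma conj_of_fixed {H K : Subgroup G} (hH : Nat.card H = 2) (hK : K ≠ ⊥) {g : G}
    (hfix : ∀ k ∈ K, g⁻¹ * k * g ∈ H) : K = H.map (MulAut.conj g).toMonoidHom := by
  have hle : K.map (MulAut.conj g⁻¹).toMonoidHom ≤ H := by
    intro y hy
    rw [mem_map_conj] at hy
    simpa [mul_assoc] using hfix _ hy
  have hne : K.map (MulAut.conj g⁻¹).toMonoidHom ≠ ⊥ := by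
    obtain ⟨x, hxK, hx1⟩ := exists_nonid hK
    intro hb
    have : g⁻¹ * x * g ∈ K.map (MulAut.conj g⁻¹).toMonoidHom := by
      rw [mem_map_conj]; simpa [mul_assoc] using hxK
    rw [hb, Subgroup.mem_bot] at this
    apply hx1
    have := congrArg (fun w => g * w * g⁻¹) this
    simpa [mul_assoc] using this
  have heq := eq_of_le_card_two hH hne hle
  have h2 := congrArg (fun W => Subgroup.map (MulAut.conj g).toMonoidHom W) heq
  simp only [map_conj_conj] at h2
  rw [mul_inv_cancel, map_conj_one] at h2
  exact h2

lemma fixedCard_eq_zero {H K : Subgroup G} (hH : Nat.card H = 2) (hK : K ≠ ⊥)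
    (h : ∀ g : G, K ≠ H.map (MulAut.conj g).toMonoidHom) : fixedCard H K = 0 := by
  unfold fixedCard
  norm_num
  rw [Nat.card_eq_zero]
  left
  constructor
  rintro ⟨x, hx⟩
  obtain ⟨g, rfl⟩ := QuotientGroup.mk_surjective x
  rw [fixed_iff] at hx
  exact h g (conj_of_fixed hH hK hx)

lemma fixedCard_conj_self {H : Subgroup G} {z : G} (hH : Nat.card H = 2)
    (hz : z ∈ Subgroup.center G) (hz2 : z * z = 1) (hzH : z ∉ H)
    (hC : ∀ t, t ∈ H → t ≠ 1 → ∀ c : G, c * t = t * c → c = 1 ∨ c = z ∨ c = t ∨ c = z * t)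
    (g₀ : G) : fixedCard H (H.map (MulAut.conj g₀).toMonoidHom) = 2 := by
  have hzinv : z⁻¹ = z := inv_eq_of_mul_eq_one_left hz2
  obtain ⟨t, htH, ht1⟩ := exists_nonid (show H ≠ ⊥ by
    intro hb; rw [hb] at hH; simp at hH)
  set K := H.map (MulAut.conj g₀).toMonoidHom with hKdef
  have hset : {x : G ⧸ H | ∀ k ∈ K, k • x = x} = {((g₀ : G) : G ⧸ H), ((g₀ * z : G) : G ⧸ H)} := by
    ext x
    simp only [Set.mem_setOf_eq, Set.mem_insert_iff, Set.mem_singleton_iff]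
    constructor
    · intro hx
      obtain ⟨g, rfl⟩ := QuotientGroup.mk_surjective x
      rw [fixed_iff] at hx
      have hKne : K ≠ ⊥ := by
        intro hb
        have : g₀ * t * g₀⁻¹ ∈ K := by rw [hKdef, mem_map_conj]; simpa [mul_assoc] using htH
        rw [hb, Subgroup.mem_bot] at this
        apply ht1
        have := congrArg (fun w => g₀⁻¹ * w * g₀) this
        simpa [mul_assoc] using this
      have hKeq := conj_of_fixed hH hKne hx
      -- H^{g₀} = H^{g}, hence H^{g⁻¹g₀} = H
      have h2 : H.map (MulAut.conj (g⁻¹ * g₀)).toMonoidHom = H := by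
        have h3 : Subgroup.map (MulAut.conj g⁻¹).toMonoidHom K
            = Subgroup.map (MulAut.conj g⁻¹).toMonoidHom (H.map (MulAut.conj g).toMonoidHom) := by
          rw [← hKeq]
        rw [hKdef] at h3
        rw [map_conj_conj, map_conj_conj, inv_mul_cancel, map_conj_one] at h3
        exact h3
      have htt : (g⁻¹ * g₀) * t * (g⁻¹ * g₀)⁻¹ = t := by
        have hmem : (g⁻¹ * g₀) * t * (g⁻¹ * g₀)⁻¹ ∈ H := by
          rw [← h2, mem_map_conj]
          have : (g⁻¹ * g₀)⁻¹ * ((g⁻¹ * g₀) * t * (g⁻¹ * g₀)⁻¹) * (g⁻¹ * g₀) = t := by group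
          rw [this]; exact htH
        have hne1 : (g⁻¹ * g₀) * t * (g⁻¹ * g₀)⁻¹ ≠ 1 := by
          intro hc
          apply ht1
          have := congrArg (fun w => (g⁻¹*g₀)⁻¹ * w * (g⁻¹*g₀)) hc
          simpa [mul_assoc] using this
        exact card_two_nonid hH hmem htH hne1 ht1
      have hdt : (g⁻¹ * g₀) * t = t * (g⁻¹ * g₀) := by
        have := congrArg (fun w => w * (g⁻¹ * g₀)) htt
        simpa [mul_assoc] using this
      rcases hC t htH ht1 _ hdt with hc | hc | hc | hc
      · left
        have hg : g₀ = g := by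
          have := congrArg (fun w => g * w) hc
          simpa [mul_assoc] using this
        rw [hg]
      · right
        have hg : g₀ = g * z := by
          have := congrArg (fun w => g * w) hc
          simpa [mul_assoc] using this
        rw [QuotientGroup.eq, hg]
        have : g⁻¹ * (g * z * z) = z * z := by group
        rw [this, hz2]
        exact H.one_mem
      · left
        have hg : g₀ = g * t := by
          have := congrArg (fun w => g * w) hc
          simpa [mul_assoc] using this
        rw [QuotientGroup.eq, hg]
        have : g⁻¹ * (g * t) = t := by group
        rw [this]; exact htH
      · right
        have hg : g₀ = g * (z * t) := by
          have := congrArg (fun w => g * w) hc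
          simpa [mul_assoc] using this
        rw [QuotientGroup.eq, hg]
        have hzc := (Subgroup.mem_center_iff.mp hz) t
        have : g⁻¹ * (g * (z * t) * z) = z * t * z := by group
        rw [this, mul_assoc, hzc, ← mul_assoc, hz2, one_mul]
        exact htH
    · intro hx
      rcases hx with hx | hx <;> (subst hx; rw [fixed_iff]; intro k hk; rw [hKdef, mem_map_conj] at hk)
      · simpa using hk
      · have hzc := (Subgroup.mem_center_iff.mp hz)
        have h4 : (g₀ * z)⁻¹ * k * (g₀ * z) = z⁻¹ * (g₀⁻¹ * k * g₀) * z := by group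
        rw [h4]
        have h5 : z⁻¹ * (g₀⁻¹ * k * g₀) * z = g₀⁻¹ * k * g₀ := by
          conv_lhs => rw [mul_assoc, hzc (g₀⁻¹ * k * g₀)]
          rw [← mul_assoc, inv_mul_cancel, one_mul]
        rw [h5]
        exact hk
  have hne : ((g₀ : G) : G ⧸ H) ≠ ((g₀ * z : G) : G ⧸ H) := by
    intro hc
    rw [QuotientGroup.eq] at hc
    simp at hc
    exact hzH hc
  unfold fixedCard
  show ((Nat.card ↥{x : G ⧸ H | ∀ k ∈ K, k • x = x} : ℕ) : ℤ) = 2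
  rw [hset, Nat.card_coe_set_eq, Set.ncard_pair hne]
  norm_num

end aux
section dihedral
variable {P : Type} [Group P]

lemma dih_srs {r s : P} (hss : s * s = 1) (hsrs : s * r * s = r⁻¹) :
    ∀ j : ℤ, s * r ^ j * s = r ^ (-j) := by
  intro j
  have hsinv : s⁻¹ = s := inv_eq_of_mul_eq_one_left hss
  calc s * r ^ j * s = (MulAut.conj s) (r ^ j) := by
        rw [MulAut.conj_apply, hsinv]
    _ = ((MulAut.conj s) r) ^ j := map_zpow _ _ _
    _ = (r⁻¹) ^ j := by rw [MulAut.conj_apply, hsinv, hsrs]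
    _ = r ^ (-j) := by rw [inv_zpow, zpow_neg]

lemma dih_sr {r s : P} (hss : s * s = 1) (hsrs : s * r * s = r⁻¹) :
    ∀ j : ℤ, s * r ^ j = r ^ (-j) * s := by
  intro j
  have := dih_srs hss hsrs j
  have h2 := congrArg (fun w => w * s) this
  simpa [mul_assoc, hss] using h2

lemma dih_struct {r s : P} (hss : s * s = 1) (hsrs : s * r * s = r⁻¹)
    (hgen : Subgroup.closure {r, s} = ⊤) :
    ∀ g : P, (∃ j : ℤ, g = r ^ j) ∨ (∃ j : ℤ, g = r ^ j * s) := by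
  have hsr := dih_sr hss hsrs
  let S : Subgroup P :=
  { carrier := {g | (∃ j : ℤ, g = r ^ j) ∨ (∃ j : ℤ, g = r ^ j * s)}
    one_mem' := Or.inl ⟨0, by simp⟩
    mul_mem' := by
      rintro a b (⟨i, rfl⟩ | ⟨i, rfl⟩) (⟨j, rfl⟩ | ⟨j, rfl⟩)
      · exact Or.inl ⟨i + j, by rw [zpow_add]⟩
      · exact Or.inr ⟨i + j, by rw [zpow_add, mul_assoc]⟩
      · refine Or.inr ⟨i + (-j), ?_⟩
        rw [mul_assoc, hsr j, zpow_add, mul_assoc]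
      · refine Or.inl ⟨i + (-j), ?_⟩
        have : r ^ i * s * (r ^ j * s) = r ^ i * (s * r ^ j) * s := by
          simp [mul_assoc]
        rw [this, hsr j, zpow_add]
        simp [mul_assoc, hss]
    inv_mem' := by
      rintro a (⟨j, rfl⟩ | ⟨j, rfl⟩)
      · exact Or.inl ⟨-j, by rw [zpow_neg]⟩
      · refine Or.inr ⟨j, ?_⟩
        have hsinv : s⁻¹ = s := inv_eq_of_mul_eq_one_left hss
        rw [mul_inv_rev, hsinv, ← zpow_neg, hsr (-j)]
        simp }
  intro g
  have : g ∈ S := by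
    have : Subgroup.closure {r, s} ≤ S := by
      rw [Subgroup.closure_le]
      rintro x (rfl | rfl)
      · exact Or.inl ⟨1, by simp⟩
      · exact Or.inr ⟨0, by simp⟩
    rw [hgen] at this
    exact this (Subgroup.mem_top g)
  exact this

lemma dih_rpow_eq_one {r : P} {m : ℕ} (hr : orderOf r = m) :
    ∀ j : ℤ, r ^ j = 1 ↔ (m : ℤ) ∣ j := by
  intro j
  rw [← hr]
  exact ⟨fun h => orderOf_dvd_iff_zpow_eq_one.mpr h, fun h => orderOf_dvd_iff_zpow_eq_one.mp h⟩

lemma dih_cancel {r : P} (a b : ℤ) (h : r ^ a = r ^ b) : r ^ (a - b) = 1 := by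
  rw [sub_eq_add_neg, zpow_add, h, zpow_neg, mul_inv_cancel]

variable {n : ℕ} {r s : P}

section zfacts
variable (hn : 4 ≤ n) (hr : orderOf r = 2 ^ (n - 1))
include hn hr

omit hr in lemma dih_pow_cast : ((2 ^ (n-1) : ℕ) : ℤ) = 2 * 2 ^ (n - 2) := by
  push_cast
  rw [show n - 1 = (n - 2) + 1 by omega, pow_succ]
  ring

lemma dih_z_sq : r ^ ((2:ℤ) ^ (n-2)) * r ^ ((2:ℤ) ^ (n-2)) = 1 := by
  rw [← zpow_add, dih_rpow_eq_one hr, dih_pow_cast hn]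
  ring_nf
  exact ⟨1, by ring⟩

lemma dih_z_ne_one : r ^ ((2:ℤ) ^ (n-2)) ≠ 1 := by
  intro h
  rw [dih_rpow_eq_one hr, dih_pow_cast hn] at h
  have h1 : (0:ℤ) < 2 ^ (n-2) := by positivity
  have := Int.le_of_dvd h1 h
  nlinarith

lemma dih_pow2 : ∀ j : ℤ, r ^ (2 * j) = 1 → r ^ j = 1 ∨ r ^ j = r ^ ((2:ℤ) ^ (n-2)) := by
  intro j hj
  rw [dih_rpow_eq_one hr, dih_pow_cast hn] at hj
  rw [mul_dvd_mul_iff_left (two_ne_zero)] at hj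
  obtain ⟨q, rfl⟩ := hj
  rw [zpow_mul]
  rcases Int.even_or_odd q with ⟨m, rfl⟩ | ⟨m, rfl⟩
  · left
    have : m + m = 2 * m := by ring
    rw [this, zpow_mul, zpow_two]
    rw [dih_z_sq hn hr]
    simp
  · right
    have h1 : (r ^ ((2:ℤ) ^ (n-2))) ^ (2 * m + 1)
        = ((r ^ ((2:ℤ) ^ (n-2))) ^ (2 * m)) * r ^ ((2:ℤ) ^ (n-2)) := by
      rw [← zpow_add_one]
    rw [h1, zpow_mul, zpow_two, dih_z_sq hn hr]
    simp

end zfacts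

section zfacts2
variable (hn : 4 ≤ n) (hr : orderOf r = 2 ^ (n - 1)) (hss : s * s = 1)
  (hsrs : s * r * s = r⁻¹) (hgen : Subgroup.closure {r, s} = ⊤)
include hn hr hss hsrs

lemma dih_z_inv : (r ^ ((2:ℤ) ^ (n-2)))⁻¹ = r ^ ((2:ℤ) ^ (n-2)) :=
  inv_eq_of_mul_eq_one_left (dih_z_sq hn hr)

include hgen in
lemma dih_z_center : r ^ ((2:ℤ) ^ (n-2)) ∈ Subgroup.center P := by
  set z := r ^ ((2:ℤ) ^ (n-2)) with hzdef
  have hcz : ∀ g : P, g ∈ ({r, s} : Set P) → z * g = g * z := by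
    rintro g (rfl | rfl)
    · exact ((Commute.refl g).zpow_left ((2:ℤ)^(n-2)))
    · have h1 : g * z = z * g := by
        rw [hzdef, dih_sr hss hsrs, zpow_neg, dih_z_inv hn hr hss hsrs]
      exact h1.symm
  have hsub : Subgroup.closure {r, s} ≤ Subgroup.centralizer {z} := by
    rw [Subgroup.closure_le]
    intro g hg
    rw [SetLike.mem_coe, Subgroup.mem_centralizer_iff]
    rintro h rfl
    exact hcz g hg
  rw [hgen] at hsub
  rw [Subgroup.mem_center_iff]
  intro g
  have := hsub (Subgroup.mem_top g)
  rw [Subgroup.mem_centralizer_iff] at this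
  exact (this z rfl).symm

include hgen in
lemma dih_center_classify :
    ∀ g ∈ Subgroup.center P, g = 1 ∨ g = r ^ ((2:ℤ) ^ (n-2)) := by
  intro g hg
  rcases dih_struct hss hsrs hgen g with ⟨j, rfl⟩ | ⟨j, rfl⟩
  · have hc := (Subgroup.mem_center_iff.mp hg) s
    rw [dih_sr hss hsrs j] at hc
    have hc2 : r ^ (-j) = r ^ j := mul_right_cancel hc
    have h3 : r ^ (2 * j) = 1 := by
      have := dih_cancel j (-j) hc2.symm
      have he : j - -j = 2 * j := by ring
      rwa [he] at this
    exact dih_pow2 hn hr j h3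
  · exfalso
    have hc := (Subgroup.mem_center_iff.mp hg) r
    -- r * (r^j * s) = (r^j * s) * r
    have hsr1 : s * r = r ^ (-(1:ℤ)) * s := by
      have := dih_sr hss hsrs 1
      rwa [zpow_one] at this
    have hL : r * (r ^ j * s) = r ^ (j + 1) * s := by
      rw [← mul_assoc, ← zpow_one_add, add_comm]
    have hR : (r ^ j * s) * r = r ^ (j - 1) * s := by
      rw [mul_assoc, hsr1, ← mul_assoc, ← zpow_add, sub_eq_add_neg]
    rw [hL, hR] at hc
    have hc2 : r ^ (j + 1) = r ^ (j - 1) := mul_right_cancel hc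
    have h3 := dih_cancel (j+1) (j-1) hc2
    have he : j + 1 - (j - 1) = 2 := by ring
    rw [he, dih_rpow_eq_one hr] at h3
    have h4 := Int.le_of_dvd (by norm_num) h3
    have h4' : (2:ℕ)^(n-1) ≤ 2 := by exact_mod_cast h4
    have h5 : (2:ℕ)^3 ≤ 2^(n-1) := Nat.pow_le_pow_right (by norm_num) (by omega)
    norm_num at h5
    omega

include hgen in
lemma dih_centralizer :
    ∀ t : P, t * t = 1 → t ≠ 1 → t ∉ Subgroup.center P →
    ∀ c : P, c * t = t * c →
      c = 1 ∨ c = r ^ ((2:ℤ) ^ (n-2)) ∨ c = t ∨ c = r ^ ((2:ℤ) ^ (n-2)) * t := by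
  intro t htt ht1 htc c hc
  set z := r ^ ((2:ℤ) ^ (n-2)) with hzdef
  obtain ⟨k, rfl⟩ : ∃ k : ℤ, t = r ^ k * s := by
    rcases dih_struct hss hsrs hgen t with ⟨j, rfl⟩ | ⟨j, rfl⟩
    · exfalso
      have h2 : r ^ (2 * j) = 1 := by
        rw [two_mul, zpow_add]; exact htt
      rcases dih_pow2 hn hr j h2 with h3 | h3
      · exact ht1 h3
      · exact htc (h3 ▸ dih_z_center hn hr hss hsrs hgen)
    · exact ⟨j, rfl⟩
  -- key computation lemmas
  have hrefl_mul : ∀ a b : ℤ, (r ^ a * s) * (r ^ b * s) = r ^ (a - b) := by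
    intro a b
    have : (r ^ a * s) * (r ^ b * s) = r ^ a * (s * r ^ b) * s := by
      simp [mul_assoc]
    rw [this, dih_sr hss hsrs b, ← mul_assoc, ← zpow_add]
    rw [mul_assoc, hss, mul_one, sub_eq_add_neg]
  have hrot_refl : ∀ a b : ℤ, r ^ a * (r ^ b * s) = r ^ (a + b) * s := by
    intro a b
    rw [← mul_assoc, ← zpow_add]
  have hrefl_rot : ∀ a b : ℤ, (r ^ a * s) * r ^ b = r ^ (a - b) * s := by
    intro a b
    rw [mul_assoc, dih_sr hss hsrs b, ← mul_assoc, ← zpow_add, sub_eq_add_neg]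
  rcases dih_struct hss hsrs hgen c with ⟨j, rfl⟩ | ⟨j, rfl⟩
  · -- c rotation
    rw [hrot_refl j k, hrefl_rot k j] at hc
    have hc2 : r ^ (j + k) = r ^ (k - j) := mul_right_cancel hc
    have h3 := dih_cancel (j+k) (k-j) hc2
    have he : j + k - (k - j) = 2 * j := by ring
    rw [he] at h3
    rcases dih_pow2 hn hr j h3 with h4 | h4
    · exact Or.inl h4
    · exact Or.inr (Or.inl h4)
  · -- c reflection
    rw [hrefl_mul j k, hrefl_mul k j] at hc
    have h3 := dih_cancel (j-k) (k-j) hc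
    have he : j - k - (k - j) = 2 * (j - k) := by ring
    rw [he] at h3
    rcases dih_pow2 hn hr (j-k) h3 with h4 | h4
    · refine Or.inr (Or.inr (Or.inl ?_))
      have : r ^ j = r ^ k := by
        have := congrArg (fun w => w * r ^ k) h4
        simpa [← zpow_add, sub_add_cancel] using this
      rw [this]
    · refine Or.inr (Or.inr (Or.inr ?_))
      have h5 : r ^ j = z * r ^ k := by
        have := congrArg (fun w => w * r ^ k) h4
        simp only [← zpow_add, sub_add_cancel] at this
        rw [this, hzdef, ← zpow_add]
      rw [h5, mul_assoc]

include hgen in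
lemma dih_z_mem_of_rot (H : Subgroup P) (j : ℤ) (hj : r ^ j ∈ H) (hj1 : r ^ j ≠ 1) :
    r ^ ((2:ℤ) ^ (n-2)) ∈ H := by
  set x := r ^ j with hxdef
  have hxord : orderOf x ∣ 2 ^ (n - 1) := by
    apply orderOf_dvd_of_pow_eq_one
    rw [hxdef, ← zpow_natCast (r ^ j) (2 ^ (n-1)), ← zpow_mul, mul_comm, zpow_mul,
      zpow_natCast, ← hr, pow_orderOf_eq_one, one_zpow]
  obtain ⟨d, hd, hdo⟩ := (Nat.dvd_prime_pow Nat.prime_two).mp hxord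
  have hd1 : 1 ≤ d := by
    rcases Nat.eq_zero_or_pos d with h | h
    · exfalso
      rw [h, pow_zero, orderOf_eq_one_iff] at hdo
      exact hj1 hdo
    · exact h
  set y := x ^ (2 ^ (d-1) : ℕ) with hydef
  have hy1 : y ≠ 1 := by
    intro h
    have := orderOf_dvd_of_pow_eq_one h
    rw [hdo] at this
    have h2 := Nat.le_of_dvd (by positivity) this
    have h3 : (2:ℕ) ^ (d-1) < 2 ^ d := Nat.pow_lt_pow_right (by norm_num) (by omega)
    omega
  have hyy : y * y = 1 := by
    rw [hydef, ← pow_add]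
    have : 2 ^ (d-1) + 2 ^ (d-1) = 2 ^ d := by
      rw [← two_mul, ← pow_succ']
      congr 1
      omega
    rw [this, ← hdo, pow_orderOf_eq_one]
  have hyH : y ∈ H := H.pow_mem hj _
  have hyrot : y = r ^ (j * (2 ^ (d-1) : ℕ)) := by
    rw [hydef, hxdef, ← zpow_natCast (r ^ j) (2 ^ (d-1)), ← zpow_mul]
  have h2 : r ^ (2 * (j * ((2 ^ (d-1) : ℕ) : ℤ))) = 1 := by
    rw [two_mul, zpow_add, ← hyrot]
    exact hyy
  rcases dih_pow2 hn hr _ h2 with h3 | h3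
  · exact absurd (by rw [hyrot]; exact h3) hy1
  · have : y = r ^ ((2:ℤ)^(n-2)) := by rw [hyrot]; exact h3
    rwa [← this]

include hgen in
lemma dih_z_mem_of_big (H : Subgroup P) (hH : 3 ≤ Nat.card H) :
    r ^ ((2:ℤ) ^ (n-2)) ∈ H := by
  classical
  have hfin : Finite H := by
    rcases finite_or_infinite H with h | h
    · exact h
    · exfalso; rw [Nat.card_eq_zero_of_infinite] at hH; omega
  have : Fintype H := Fintype.ofFinite H
  rw [Nat.card_eq_fintype_card] at hH
  obtain ⟨a, b, c, hab, hac, hbc⟩ := (Fintype.two_lt_card_iff (α := H)).mp (by omega)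
  -- pick two distinct non-identity elements
  obtain ⟨u, v, hu1, hv1, huv⟩ : ∃ u v : H, u ≠ 1 ∧ v ≠ 1 ∧ u ≠ v := by
    by_cases ha : a = 1
    · exact ⟨b, c, by rw [← ha]; exact hab.symm, by rw [← ha]; exact hac.symm, hbc⟩
    · by_cases hb : b = 1
      · exact ⟨a, c, ha, by rw [← hb]; exact hbc.symm, hac⟩
      · exact ⟨a, b, ha, hb, hab⟩
  have hx : (u : P) ∈ H := u.2
  have hy : (v : P) ∈ H := v.2
  have hx1 : (u : P) ≠ 1 := fun h => hu1 (Subtype.ext (by simp [h]))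
  have hy1 : (v : P) ≠ 1 := fun h => hv1 (Subtype.ext (by simp [h]))
  have hxy : (u : P) ≠ (v : P) := fun h => huv (Subtype.ext h)
  rcases dih_struct hss hsrs hgen (u : P) with ⟨i, hi⟩ | ⟨i, hi⟩
  · exact dih_z_mem_of_rot hn hr hss hsrs hgen H i (hi ▸ hx) (hi ▸ hx1)
  rcases dih_struct hss hsrs hgen (v : P) with ⟨j, hj⟩ | ⟨j, hj⟩
  · exact dih_z_mem_of_rot hn hr hss hsrs hgen H j (hj ▸ hy) (hj ▸ hy1)
  -- both reflections: their product is a nontrivial rotation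
  have hprod : (u : P) * (v : P) = r ^ (i - j) := by
    rw [hi, hj]
    have : (r ^ i * s) * (r ^ j * s) = r ^ i * (s * r ^ j) * s := by
      simp [mul_assoc]
    rw [this, dih_sr hss hsrs j, ← mul_assoc, ← zpow_add]
    rw [mul_assoc, hss, mul_one, sub_eq_add_neg]
  have hne : r ^ (i - j) ≠ 1 := by
    intro h
    apply hxy
    rw [hi, hj]
    have : r ^ i = r ^ j := by
      have := congrArg (fun w => w * r ^ j) h
      simpa [← zpow_add, sub_add_cancel] using this
    rw [this]
  exact dih_z_mem_of_rot hn hr hss hsrs hgen H (i - j)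
    (by rw [← hprod]; exact H.mul_mem hx hy) hne

end zfacts2
end dihedral
section aux2
variable {G : Type} [Group G]

lemma mem_map_conj' (K : Subgroup G) (a x : G) :
    x ∈ K.map (MulAut.conj a).toMonoidHom ↔ a⁻¹ * x * a ∈ K := by
  constructor
  · rintro ⟨k, hk, rfl⟩
    simpa [MulAut.conj_apply, mul_assoc] using hk
  · intro h
    exact ⟨a⁻¹ * x * a, h, by simp [MulAut.conj_apply, mul_assoc]⟩

lemma fixedCard_map_conj (H K : Subgroup G) (g : G) :
    fixedCard H (K.map (MulAut.conj g).toMonoidHom) = fixedCard H K := by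
  unfold fixedCard
  congr 1
  refine Nat.card_congr (Equiv.subtypeEquiv (MulAction.toPerm g⁻¹ : Equiv.Perm (G ⧸ H)) ?_)
  intro x
  constructor
  · intro h k hk
    have hmem : g * k * g⁻¹ ∈ K.map (MulAut.conj g).toMonoidHom := by
      rw [mem_map_conj']
      have : g⁻¹ * (g * k * g⁻¹) * g = k := by group
      rw [this]; exact hk
    have h1 := h _ hmem
    show k • (g⁻¹ • x) = g⁻¹ • x
    calc k • g⁻¹ • x = (k * g⁻¹) • x := by rw [mul_smul]
      _ = (g⁻¹ * (g * k * g⁻¹)) • x := by group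
      _ = g⁻¹ • ((g * k * g⁻¹) • x) := by rw [mul_smul]
      _ = g⁻¹ • x := by rw [h1]
  · intro h k' hk'
    rw [mem_map_conj'] at hk'
    have h2 := h _ hk'
    show k' • x = x
    have h3 : (g⁻¹ * k' * g) • (g⁻¹ • x) = g⁻¹ • x := h2
    calc k' • x = g • ((g⁻¹ * k' * g) • (g⁻¹ • x)) := by
          rw [← mul_smul, ← mul_smul]
          congr 1
          group
      _ = g • (g⁻¹ • x) := by rw [h3]
      _ = x := by rw [← mul_smul]; simp

variable [Fintype G] (M : BurnsideModel G)

lemma mark_map_conj (K : Subgroup G) (g : G) (x : M.carrier) :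
    M.mark (K.map (MulAut.conj g).toMonoidHom) x = M.mark K x := by
  have hspan := M.bas_span x
  induction hspan using Submodule.span_induction with
  | mem y hy =>
    obtain ⟨H, rfl⟩ := hy
    rw [M.mark_bas, M.mark_bas, fixedCard_map_conj]
  | zero => simp
  | add y z _ _ hy hz => rw [map_add, map_add, hy, hz]
  | smul c y _ hy => rw [map_zsmul, map_zsmul, hy]

lemma fixed_set_zpowers' (H : Subgroup G) (g : G) :
    {x : G ⧸ H | ∀ k ∈ Subgroup.zpowers g, k • x = x} = MulAction.fixedBy (G ⧸ H) g := by
  ext x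
  simp only [Set.mem_setOf_eq, MulAction.mem_fixedBy]
  constructor
  · intro h
    exact h g (Subgroup.mem_zpowers g)
  · intro h k hk
    have hg : g ∈ MulAction.stabilizer G x := h
    have : Subgroup.zpowers g ≤ MulAction.stabilizer G x := by
      rw [Subgroup.zpowers_le]
      exact hg
    exact this hk

lemma sum_fixedCard_zpowers' (H : Subgroup G) :
    ∑ g : G, fixedCard H (Subgroup.zpowers g) = (Fintype.card G : ℤ) := by
  classical
  have hfc : ∀ g : G, fixedCard H (Subgroup.zpowers g)
      = (Fintype.card (MulAction.fixedBy (G ⧸ H) g) : ℤ) := by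
    intro g
    unfold fixedCard
    rw [show Nat.card {x : G ⧸ H // ∀ k ∈ Subgroup.zpowers g, k • x = x}
        = Nat.card (MulAction.fixedBy (G ⧸ H) g) from congrArg Nat.card
          (congrArg _ (fixed_set_zpowers' H g)), Nat.card_eq_fintype_card]
  simp_rw [hfc]
  rw [← Nat.cast_sum]
  norm_cast
  rw [MulAction.sum_card_fixedBy_eq_card_orbits_mul_card_group]
  have h1 : Subsingleton (MulAction.orbitRel.Quotient G (G ⧸ H)) :=
    (MulAction.pretransitive_iff_subsingleton_quotient G (G ⧸ H)).mp inferInstance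
  have h2 : Nonempty (MulAction.orbitRel.Quotient G (G ⧸ H)) :=
    ⟨Quotient.mk _ ((1 : G) : G ⧸ H)⟩
  rw [Fintype.card_eq_one_iff.mpr ⟨h2.some, fun y => Subsingleton.elim y h2.some⟩, one_mul]

lemma sum_mark_zpowers_dvd (x : M.carrier) :
    (Fintype.card G : ℤ) ∣ ∑ g : G, M.mark (Subgroup.zpowers g) x := by
  have hspan := M.bas_span x
  induction hspan using Submodule.span_induction with
  | mem y hy =>
    obtain ⟨H, rfl⟩ := hy
    simp_rw [M.mark_bas]
    rw [sum_fixedCard_zpowers']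
  | zero => simp
  | add y z _ _ hy hz =>
    simp_rw [map_add, Finset.sum_add_distrib]
    exact dvd_add hy hz
  | smul c y _ hy =>
    simp_rw [map_zsmul, smul_eq_mul, ← Finset.mul_sum]
    exact Dvd.dvd.mul_left hy c

end aux2

section sumhelper

lemma sum_ite_classify {α : Type} [Fintype α] [DecidableEq α] (one : α) (A B : Finset α)
    (h1A : one ∉ A) (h1B : one ∉ B) (hAB : ∀ g, g ∈ A → g ∉ B)
    (e₀ eI eJ e : ℤ) (f : α → ℤ)
    (hf : ∀ g : α, f g = if g = one then e₀ else if g ∈ A then eI else if g ∈ B then eJ else e) :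
    ∑ g : α, f g
      = e₀ + A.card * eI + B.card * eJ + ((Fintype.card α : ℤ) - 1 - A.card - B.card) * e := by
  have hpt : ∀ g : α, f g = e + ((if g = one then e₀ - e else 0)
      + ((if g ∈ A then eI - e else 0) + (if g ∈ B then eJ - e else 0))) := by
    intro g
    rw [hf g]
    by_cases h1 : g = one
    · subst h1
      simp [h1A, h1B]
    · by_cases h2 : g ∈ A
      · simp [h1, h2, hAB g h2]
      · by_cases h3 : g ∈ B
        · simp [h1, h2, h3]
        · simp [h1, h2, h3]
  rw [Finset.sum_congr rfl (fun g _ => hpt g)]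
  rw [Finset.sum_add_distrib, Finset.sum_add_distrib, Finset.sum_add_distrib]
  rw [Finset.sum_const, Finset.sum_ite_eq' Finset.univ one (fun _ => e₀ - e)]
  simp only [Finset.mem_univ, if_true]
  have hA : ∑ g : α, (if g ∈ A then eI - e else 0) = A.card * (eI - e) := by
    rw [Finset.sum_ite_mem, Finset.univ_inter, Finset.sum_const, nsmul_eq_mul]
  have hB : ∑ g : α, (if g ∈ B then eJ - e else 0) = B.card * (eJ - e) := by
    rw [Finset.sum_ite_mem, Finset.univ_inter, Finset.sum_const, nsmul_eq_mul]
  rw [hA, hB, Finset.card_univ, nsmul_eq_mul]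
  ring

end sumhelper

section auxbot
variable {G : Type} [Group G]

lemma fixedCard_bot_right (H : Subgroup G) : fixedCard H ⊥ = Nat.card (G ⧸ H) := by
  unfold fixedCard
  congr 1
  refine Nat.card_congr (Equiv.subtypeUnivEquiv ?_)
  intro x k hk
  rw [Subgroup.mem_bot] at hk
  simp [hk]

lemma fixedCard_bot_left {K : Subgroup G} (hK : K ≠ ⊥) : fixedCard ⊥ K = 0 := by
  unfold fixedCard
  norm_num
  rw [Nat.card_eq_zero]
  left
  constructor
  rintro ⟨x, hx⟩
  obtain ⟨g, rfl⟩ := QuotientGroup.mk_surjective x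
  rw [fixed_iff] at hx
  apply hK
  ext k
  simp only [Subgroup.mem_bot]
  constructor
  · intro hk
    have := hx k hk
    rw [Subgroup.mem_bot] at this
    have : g * (g⁻¹ * k * g) * g⁻¹ = g * 1 * g⁻¹ := by rw [this]
    simpa [mul_assoc] using this
  · rintro rfl; exact K.one_mem

end auxbot

set_option maxHeartbeats 1600000 in
/-- Let `P` be a dihedral `2`-group of order `2^n ≥ 16`, and let `I`, `J` be
representatives of the two conjugacy classes of non-central subgroups of order `2`.
Then `a = [P/P] + [P/1] - [P/I] - [P/J]` is a unit of `B(P)`, and the faithful part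
`∂B^×(P)` equals `{[P/P], a}`, a group of order `2`. -/
theorem stmt11 {P : Type} [Group P] [Fintype P]
    (n : ℕ) (hn : 4 ≤ n) (hcard : Fintype.card P = 2 ^ n)
    (r s : P) (hr : orderOf r = 2 ^ (n - 1))
    (hs2 : s ^ 2 = 1) (hs1 : s ≠ 1) (hsrs : s * r * s = r⁻¹)
    (hgen : Subgroup.closure {r, s} = ⊤)
    (M : BurnsideModel P)
    (I J : Subgroup P) (hI : Nat.card I = 2) (hJ : Nat.card J = 2)
    (hIc : ¬ I ≤ Subgroup.center P) (hJc : ¬ J ≤ Subgroup.center P)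
    (hIJ : ∀ g : P, J ≠ I.map (MulAut.conj g).toMonoidHom)
    (hrep : ∀ H : Subgroup P, Nat.card H = 2 → ¬ H ≤ Subgroup.center P →
      (∃ g : P, H = I.map (MulAut.conj g).toMonoidHom) ∨
      (∃ g : P, H = J.map (MulAut.conj g).toMonoidHom)) :
    IsUnit (1 + M.bas ⊥ - M.bas I - M.bas J) ∧
    {a : M.carrier | IsUnit a ∧
        ∀ N : Subgroup P, N.Normal → N ≠ ⊥ → ∀ H : Subgroup P, N ≤ H → M.mark H a = 1}
      = {1, 1 + M.bas ⊥ - M.bas I - M.bas J} := by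
  classical
  have hss : s * s = 1 := by rw [← pow_two]; exact hs2
  set z : P := r ^ ((2:ℤ) ^ (n - 2)) with hzdef
  set m : ℤ := 2 ^ (n - 2) with hmdef
  have hm4 : (4:ℤ) ≤ m := by
    rw [hmdef, show (4:ℤ) = 2 ^ 2 by norm_num]
    apply pow_le_pow_right₀ (by norm_num)
    omega
  have hP4 : (Fintype.card P : ℤ) = 4 * m := by
    have hn' : n - 2 + 2 = n := by omega
    have hNpow : (2:ℕ)^(n-2) * 2^2 = 2^n := by
      rw [← pow_add, hn']
    have hcast := congrArg (Nat.cast (R := ℤ)) hNpow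
    push_cast at hcast
    rw [hcard, hmdef]
    push_cast
    linarith only [hcast]
  have hhalf : ((2 ^ (n-1) : ℕ) : ℤ) = 2 * m := by
    rw [hmdef]
    push_cast
    rw [show n - 1 = (n - 2) + 1 by omega, pow_succ]
    ring
  have hz2 : z * z = 1 := dih_z_sq hn hr
  have hz1 : z ≠ 1 := dih_z_ne_one hn hr
  have hzc : z ∈ Subgroup.center P := dih_z_center hn hr hss hsrs hgen
  have hCc := dih_centralizer hn hr hss hsrs hgen
  have hclassify := dih_center_classify hn hr hss hsrs hgen
  have hzbig := dih_z_mem_of_big hn hr hss hsrs hgen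
  have hcardP : Nat.card P = 2 ^ n := by rw [Nat.card_eq_fintype_card, hcard]
  -- basic facts about noncentral order-2 subgroups
  have hkey : ∀ (H0 : Subgroup P), Nat.card H0 = 2 → ¬ H0 ≤ Subgroup.center P →
      z ∉ H0 ∧ (∀ t, t ∈ H0 → t ≠ 1 →
        ∀ c : P, c * t = t * c → c = 1 ∨ c = z ∨ c = t ∨ c = z * t) := by
    intro H0 h2 hc
    constructor
    · intro hzin
      apply hc
      intro x hx
      by_cases hx1 : x = 1
      · rw [hx1]; exact Subgroup.one_mem _
      · rw [card_two_nonid h2 hx hzin hx1 hz1]; exact hzc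
    · intro t ht ht1 c hcomm
      have htt : t * t = 1 := by
        by_contra htt
        have := card_two_nonid h2 (H0.mul_mem ht ht) ht htt ht1
        exact ht1 (mul_left_cancel (a := t) (by rw [this, mul_one]))
      have htc : t ∉ Subgroup.center P := by
        intro htc
        apply hc
        intro x hx
        by_cases hx1 : x = 1
        · rw [hx1]; exact Subgroup.one_mem _
        · rw [card_two_nonid h2 hx ht hx1 ht1]; exact htc
      exact hCc t htt ht1 htc c hcomm
  have hfcI2 : ∀ g₀ : P, fixedCard I (I.map (MulAut.conj g₀).toMonoidHom) = 2 :=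
    fun g₀ => fixedCard_conj_self hI hzc hz2 (hkey I hI hIc).1 (hkey I hI hIc).2 g₀
  have hfcJ2 : ∀ g₀ : P, fixedCard J (J.map (MulAut.conj g₀).toMonoidHom) = 2 :=
    fun g₀ => fixedCard_conj_self hJ hzc hz2 (hkey J hJ hJc).1 (hkey J hJ hJc).2 g₀
  have hmapcard : ∀ (H0 : Subgroup P) (g : P),
      Nat.card (H0.map (MulAut.conj g).toMonoidHom) = Nat.card H0 :=
    fun H0 g => (Nat.card_congr
      (Subgroup.equivMapOfInjective H0 _ (MulAut.conj g).injective).toEquiv).symm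
  have hbotI : ∀ g : P, (⊥ : Subgroup P) ≠ I.map (MulAut.conj g).toMonoidHom := by
    intro g h
    have := hmapcard I g
    rw [← h, Subgroup.card_bot, hI] at this
    omega
  have hbotJ : ∀ g : P, (⊥ : Subgroup P) ≠ J.map (MulAut.conj g).toMonoidHom := by
    intro g h
    have := hmapcard J g
    rw [← h, Subgroup.card_bot, hJ] at this
    omega
  have hIJconj : ∀ g h : P,
      I.map (MulAut.conj g).toMonoidHom ≠ J.map (MulAut.conj h).toMonoidHom := by
    intro g h he
    apply hIJ (h⁻¹ * g)
    have h1 : (J.map (MulAut.conj h).toMonoidHom).map (MulAut.conj h⁻¹).toMonoidHom = J := by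
      rw [map_conj_conj, inv_mul_cancel, map_conj_one]
    rw [← h1, ← he, map_conj_conj]
  -- fixed point counts over ⊥
  have hquot : ∀ (H0 : Subgroup P), Nat.card H0 = 2 → fixedCard H0 ⊥ = 2 * m := by
    intro H0 h2
    rw [fixedCard_bot_right]
    have hc2 := Subgroup.card_eq_card_quotient_mul_card_subgroup H0
    rw [h2, hcardP] at hc2
    have h3 : (2:ℕ) ^ n = 2 ^ (n-1) * 2 := by
      rw [← pow_succ]
      congr 1
      omega
    have h4 : Nat.card (P ⧸ H0) = 2 ^ (n-1) := by omega
    rw [h4, hhalf]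
  have hfc_bb : fixedCard (⊥ : Subgroup P) ⊥ = 4 * m := by
    rw [fixedCard_bot_right]
    have hc2 := Subgroup.card_eq_card_quotient_mul_card_subgroup (⊥ : Subgroup P)
    rw [Subgroup.card_bot, mul_one] at hc2
    rw [← hc2, hcardP, ← hP4, hcard]
  have hfcI0 : ∀ K : Subgroup P, K ≠ ⊥ →
      (¬ ∃ g : P, K = I.map (MulAut.conj g).toMonoidHom) → fixedCard I K = 0 :=
    fun K h1 h2 => fixedCard_eq_zero hI h1 (fun g he => h2 ⟨g, he⟩)
  have hfcJ0 : ∀ K : Subgroup P, K ≠ ⊥ →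
      (¬ ∃ g : P, K = J.map (MulAut.conj g).toMonoidHom) → fixedCard J K = 0 :=
    fun K h1 h2 => fixedCard_eq_zero hJ h1 (fun g he => h2 ⟨g, he⟩)
  -- the classification of the marks of a
  have hv : ∀ K : Subgroup P, M.mark K (1 + M.bas ⊥ - M.bas I - M.bas J)
      = 1 + fixedCard ⊥ K - fixedCard I K - fixedCard J K := by
    intro K
    rw [map_sub, map_sub, map_add, map_one, M.mark_bas, M.mark_bas, M.mark_bas]
  have hmarkA : ∀ K : Subgroup P, M.mark K (1 + M.bas ⊥ - M.bas I - M.bas J)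
      = if (∃ g : P, K = I.map (MulAut.conj g).toMonoidHom)
          ∨ (∃ g : P, K = J.map (MulAut.conj g).toMonoidHom) then -1 else 1 := by
    intro K
    rw [hv]
    by_cases hKbot : K = ⊥
    · subst hKbot
      rw [if_neg]
      · rw [hfc_bb, hquot I hI, hquot J hJ]
        ring
      · rintro (⟨g, he⟩ | ⟨g, he⟩)
        · exact hbotI g he
        · exact hbotJ g he
    · by_cases hKI : ∃ g : P, K = I.map (MulAut.conj g).toMonoidHom
      · obtain ⟨g, rfl⟩ := hKI
        rw [if_pos (Or.inl ⟨g, rfl⟩)]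
        rw [fixedCard_bot_left hKbot, hfcI2 g, hfcJ0 _ hKbot
          (fun ⟨h, he⟩ => hIJconj g h he)]
        ring
      · by_cases hKJ : ∃ g : P, K = J.map (MulAut.conj g).toMonoidHom
        · obtain ⟨g, rfl⟩ := hKJ
          rw [if_pos (Or.inr ⟨g, rfl⟩)]
          rw [fixedCard_bot_left hKbot, hfcJ2 g,
            hfcI0 _ hKbot (fun ⟨h, he⟩ => hIJconj h g he.symm)]
          ring
        · rw [if_neg (fun h => h.elim hKI hKJ)]
          rw [fixedCard_bot_left hKbot, hfcI0 _ hKbot hKI, hfcJ0 _ hKbot hKJ]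
          ring
  have haa : (1 + M.bas ⊥ - M.bas I - M.bas J) * (1 + M.bas ⊥ - M.bas I - M.bas J) = 1 :=
    M.mark_injective _ _ (fun K => by
      rw [map_mul, hmarkA, map_one]
      split_ifs <;> norm_num)
  have hUnit : IsUnit (1 + M.bas ⊥ - M.bas I - M.bas J) := IsUnit.of_mul_eq_one _ haa
  -- general classification: subgroups not conjugate to I or J contain z
  have hclass : ∀ K : Subgroup P, K ≠ ⊥ →
      (¬ ∃ g : P, K = I.map (MulAut.conj g).toMonoidHom) →
      (¬ ∃ g : P, K = J.map (MulAut.conj g).toMonoidHom) → z ∈ K := by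
    intro K h1 h2 h3
    rcases lt_or_ge (Nat.card K) 3 with hlt | hge
    · have hpos : 0 < Nat.card K := Nat.card_pos
      have hne1 : Nat.card K ≠ 1 := fun h => h1 (Subgroup.card_eq_one.mp h)
      have h2card : Nat.card K = 2 := by omega
      by_cases hKc : K ≤ Subgroup.center P
      · obtain ⟨t, htK, ht1⟩ := exists_nonid h1
        rcases hclassify t (hKc htK) with h | h
        · exact absurd h ht1
        · have hzt : z = t := by rw [hzdef, hmdef]; exact h.symm
          rw [hzt]; exact htK
      · rcases hrep K h2card hKc with ⟨g, he⟩ | ⟨g, he⟩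
        · exact absurd ⟨g, he⟩ h2
        · exact absurd ⟨g, he⟩ h3
    · exact hzbig K hge
  -- normal subgroups rule out conjugates of I and J
  have hnoconj : ∀ (H0 : Subgroup P), Nat.card H0 = 2 → ¬ H0 ≤ Subgroup.center P →
      ∀ (N : Subgroup P), N.Normal → N ≠ ⊥ → ∀ g : P,
        N ≤ H0.map (MulAut.conj g).toMonoidHom → False := by
    intro H0 h2 hc N hN hNbot g hle
    set W := H0.map (MulAut.conj g).toMonoidHom with hWdef
    have hWcard : Nat.card W = 2 := by rw [hWdef, hmapcard, h2]
    have hNW : N = W := eq_of_le_card_two hWcard hNbot hle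
    obtain ⟨t, htW, ht1⟩ := exists_nonid (hNW ▸ hNbot)
    have htc : t ∈ Subgroup.center P := by
      rw [Subgroup.mem_center_iff]
      intro g'
      have hconj : g' * t * g'⁻¹ ∈ W := by
        rw [← hNW]
        exact hN.conj_mem t (hNW ▸ htW) g'
      have hconj1 : g' * t * g'⁻¹ ≠ 1 := by
        intro hcc
        apply ht1
        have := congrArg (fun w => g'⁻¹ * w * g') hcc
        simpa [mul_assoc] using this
      have := card_two_nonid hWcard hconj htW hconj1 ht1
      have h5 := congrArg (fun w => w * g') this
      simpa [mul_assoc] using h5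
    apply hc
    intro x hx
    have hxW : g * x * g⁻¹ ∈ W := by
      rw [hWdef, mem_map_conj]
      have : g⁻¹ * (g * x * g⁻¹) * g = x := by group
      rw [this]; exact hx
    by_cases hx1 : x = 1
    · rw [hx1]; exact Subgroup.one_mem _
    · have hgx1 : g * x * g⁻¹ ≠ 1 := by
        intro hcc
        apply hx1
        have := congrArg (fun w => g⁻¹ * w * g) hcc
        simpa [mul_assoc] using this
      have hxt := card_two_nonid hWcard hxW htW hgx1 ht1
      have hx_eq : x = t := by
        have h5 := (Subgroup.mem_center_iff.mp htc) g
        have h6 : g * x = t * g := by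
          have := congrArg (fun w => w * g) hxt
          simpa [mul_assoc] using this
        have h7 : g * x = g * t := by rw [h6, ← h5]
        exact mul_left_cancel h7
      rw [hx_eq]
      exact htc
  refine ⟨hUnit, ?_⟩
  ext u
  simp only [Set.mem_setOf_eq, Set.mem_insert_iff, Set.mem_singleton_iff]
  constructor
  · rintro ⟨hu, hdefl⟩
    -- marks are ±1
    have hpm : ∀ K : Subgroup P, M.mark K u = 1 ∨ M.mark K u = -1 := by
      intro K
      obtain ⟨w, hw⟩ := hu.exists_right_inv
      have : M.mark K u * M.mark K w = 1 := by rw [← map_mul, hw, map_one]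
      exact Int.isUnit_iff.mp (IsUnit.of_mul_eq_one _ this)
    have h1mark : ∀ K : Subgroup P, z ∈ K → M.mark K u = 1 := by
      intro K hzK
      refine hdefl (Subgroup.zpowers z) ?_ ?_ K (Subgroup.zpowers_le.mpr hzK)
      · constructor
        intro x hx g'
        have hxc : x ∈ Subgroup.center P := Subgroup.zpowers_le.mpr hzc hx
        have h5 := (Subgroup.mem_center_iff.mp hxc) g'
        have : g' * x * g'⁻¹ = x := by rw [h5, mul_assoc, mul_inv_cancel, mul_one]
        rw [this]
        exact hx
      · intro hb
        apply hz1
        rw [← Subgroup.mem_bot, ← hb]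
        exact Subgroup.mem_zpowers z
    have humark : ∀ K : Subgroup P, M.mark K u
        = if K = ⊥ then M.mark ⊥ u
          else if ∃ g : P, K = I.map (MulAut.conj g).toMonoidHom then M.mark I u
          else if ∃ g : P, K = J.map (MulAut.conj g).toMonoidHom then M.mark J u
          else 1 := by
      intro K
      by_cases h1 : K = ⊥
      · rw [if_pos h1, h1]
      · rw [if_neg h1]
        by_cases h2 : ∃ g : P, K = I.map (MulAut.conj g).toMonoidHom
        · obtain ⟨g, rfl⟩ := h2
          rw [if_pos ⟨g, rfl⟩]
          exact mark_map_conj M I g u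
        · rw [if_neg h2]
          by_cases h3 : ∃ g : P, K = J.map (MulAut.conj g).toMonoidHom
          · obtain ⟨g, rfl⟩ := h3
            rw [if_pos ⟨g, rfl⟩]
            exact mark_map_conj M J g u
          · rw [if_neg h3]
            exact h1mark K (hclass K h1 h2 h3)
    -- the two conjugacy class Finsets
    set A : Finset P := Finset.univ.filter
      (fun g => ∃ h : P, Subgroup.zpowers g = I.map (MulAut.conj h).toMonoidHom) with hAdef
    set B : Finset P := Finset.univ.filter
      (fun g => ∃ h : P, Subgroup.zpowers g = J.map (MulAut.conj h).toMonoidHom) with hBdef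
    have hmemA : ∀ g : P, g ∈ A ↔
        ∃ h : P, Subgroup.zpowers g = I.map (MulAut.conj h).toMonoidHom := by
      intro g; rw [hAdef, Finset.mem_filter]; simp
    have hmemB : ∀ g : P, g ∈ B ↔
        ∃ h : P, Subgroup.zpowers g = J.map (MulAut.conj h).toMonoidHom := by
      intro g; rw [hBdef, Finset.mem_filter]; simp
    have h1A : (1 : P) ∉ A := by
      rw [hmemA]
      rintro ⟨h, he⟩
      rw [Subgroup.zpowers_one_eq_bot] at he
      exact hbotI h he
    have h1B : (1 : P) ∉ B := by
      rw [hmemB]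
      rintro ⟨h, he⟩
      rw [Subgroup.zpowers_one_eq_bot] at he
      exact hbotJ h he
    have hABd : ∀ g : P, g ∈ A → g ∉ B := by
      intro g hgA hgB
      obtain ⟨h1, he1⟩ := (hmemA g).mp hgA
      obtain ⟨h2, he2⟩ := (hmemB g).mp hgB
      exact hIJconj h1 h2 (he1 ▸ he2)
    -- counting the two classes using Burnside applied to bas I and bas J
    have hcountI : (A.card : ℤ) = m := by
      have hsum := sum_fixedCard_zpowers' (G := P) I
      have heq := sum_ite_classify (1 : P) A B h1A h1B hABd (2*m) 2 0 0
        (fun g => fixedCard I (Subgroup.zpowers g)) ?_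
      · rw [heq, hP4] at hsum
        have hc3 : (B.card : ℤ) * 0 = 0 := by ring
        -- hsum : 2*m + A.card * 2 + ... = 4*m
        have : (A.card : ℤ) * 2 = 2 * m := by linarith only [hsum]
        linarith only [this]
      · intro g
        show fixedCard I (Subgroup.zpowers g) = _
        by_cases h1 : g = 1
        · rw [if_pos h1, h1, Subgroup.zpowers_one_eq_bot]
          exact hquot I hI
        · rw [if_neg h1]
          have hKbot : Subgroup.zpowers g ≠ ⊥ := by
            rw [ne_eq, Subgroup.zpowers_eq_bot]
            exact h1
          by_cases h2 : g ∈ A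
          · rw [if_pos h2]
            obtain ⟨h, he⟩ := (hmemA g).mp h2
            rw [he]
            exact hfcI2 h
          · rw [if_neg h2]
            have hnI : ¬ ∃ h : P, Subgroup.zpowers g = I.map (MulAut.conj h).toMonoidHom :=
              fun hc => h2 ((hmemA g).mpr hc)
            by_cases h3 : g ∈ B
            · rw [if_pos h3]
              exact hfcI0 _ hKbot hnI
            · rw [if_neg h3]
              exact hfcI0 _ hKbot hnI
    have hcountJ : (B.card : ℤ) = m := by
      have hsum := sum_fixedCard_zpowers' (G := P) J
      have heq := sum_ite_classify (1 : P) A B h1A h1B hABd (2*m) 0 2 0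
        (fun g => fixedCard J (Subgroup.zpowers g)) ?_
      · rw [heq, hP4] at hsum
        linarith only [hsum]
      · intro g
        show fixedCard J (Subgroup.zpowers g) = _
        by_cases h1 : g = 1
        · rw [if_pos h1, h1, Subgroup.zpowers_one_eq_bot]
          exact hquot J hJ
        · rw [if_neg h1]
          have hKbot : Subgroup.zpowers g ≠ ⊥ := by
            rw [ne_eq, Subgroup.zpowers_eq_bot]
            exact h1
          have hnJ' : (g ∉ B) → ¬ ∃ h : P, Subgroup.zpowers g = J.map (MulAut.conj h).toMonoidHom :=
            fun hgB hc => hgB ((hmemB g).mpr hc)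
          by_cases h2 : g ∈ A
          · rw [if_pos h2]
            exact hfcJ0 _ hKbot (hnJ' (hABd g h2))
          · rw [if_neg h2]
            by_cases h3 : g ∈ B
            · rw [if_pos h3]
              obtain ⟨h, he⟩ := (hmemB g).mp h3
              rw [he]
              exact hfcJ2 h
            · rw [if_neg h3]
              exact hfcJ0 _ hKbot (hnJ' h3)
    -- the congruence for u
    have hdvd := sum_mark_zpowers_dvd M u
    have hSu := sum_ite_classify (1 : P) A B h1A h1B hABd
      (M.mark ⊥ u) (M.mark I u) (M.mark J u) 1
      (fun g => M.mark (Subgroup.zpowers g) u) ?_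
    swap
    · intro g
      show M.mark (Subgroup.zpowers g) u = _
      rw [humark (Subgroup.zpowers g)]
      by_cases h1 : g = 1
      · rw [if_pos h1, h1, Subgroup.zpowers_one_eq_bot, if_pos rfl]
      · have hKbot : Subgroup.zpowers g ≠ ⊥ := by
          rw [ne_eq, Subgroup.zpowers_eq_bot]
          exact h1
        rw [if_neg h1, if_neg hKbot]
        by_cases h2 : g ∈ A
        · rw [if_pos h2, if_pos ((hmemA g).mp h2)]
        · rw [if_neg h2, if_neg (fun hc => h2 ((hmemA g).mpr hc))]
          by_cases h3 : g ∈ B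
          · rw [if_pos h3, if_pos ((hmemB g).mp h3)]
          · rw [if_neg h3, if_neg (fun hc => h3 ((hmemB g).mpr hc))]
    rw [hSu, hP4, hcountI, hcountJ] at hdvd
    -- case analysis on the three signs
    rcases hpm ⊥ with he0 | he0 <;> rcases hpm I with heI | heI <;> rcases hpm J with heJ | heJ <;>
      rw [he0, heI, heJ] at hdvd
    · -- all 1 : u = 1
      left
      apply M.mark_injective
      intro K
      rw [map_one, humark K]
      split_ifs
      · exact he0
      · exact heI
      · exact heJ
      · rfl
    · -- (1,1,-1) : contradiction
      exfalso
      rw [show (1:ℤ) + ↑m * 1 + ↑m * (-1) + (4 * m - 1 - ↑m - ↑m) * 1 = 2*m by ring]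
        at hdvd
      have h6 : (0:ℤ) < 2*m := by linarith only [hm4]
      have := Int.le_of_dvd h6 hdvd
      linarith only [hm4, this]
    · -- (1,-1,1) : contradiction
      exfalso
      rw [show (1:ℤ) + ↑m * (-1) + ↑m * 1 + (4 * m - 1 - ↑m - ↑m) * 1 = 2*m by ring]
        at hdvd
      have h6 : (0:ℤ) < 2*m := by linarith only [hm4]
      have := Int.le_of_dvd h6 hdvd
      linarith only [hm4, this]
    · -- (1,-1,-1) : u = a
      right
      apply M.mark_injective
      intro K
      rw [humark K, hmarkA K]
      by_cases h1 : K = ⊥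
      · rw [if_pos h1, if_neg]
        · exact he0
        · rw [h1]
          rintro (⟨g, hg⟩ | ⟨g, hg⟩)
          · exact hbotI g hg
          · exact hbotJ g hg
      · rw [if_neg h1]
        by_cases h2 : ∃ g : P, K = I.map (MulAut.conj g).toMonoidHom
        · rw [if_pos h2, if_pos (Or.inl h2)]
          exact heI
        · rw [if_neg h2]
          by_cases h3 : ∃ g : P, K = J.map (MulAut.conj g).toMonoidHom
          · rw [if_pos h3, if_pos (Or.inr h3)]
            exact heJ
          · rw [if_neg h3, if_neg (fun h => h.elim h2 h3)]
    · -- (-1,1,1)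
      exfalso
      rw [show (-1:ℤ) + ↑m * 1 + ↑m * 1 + (4 * m - 1 - ↑m - ↑m) * 1 = 4*m - 2 by ring] at hdvd
      have h6 : (0:ℤ) < 4*m - 2 := by linarith only [hm4]
      have := Int.le_of_dvd h6 hdvd
      linarith only [hm4, this]
    · -- (-1,1,-1)
      exfalso
      rw [show (-1:ℤ) + ↑m * 1 + ↑m * (-1) + (4 * m - 1 - ↑m - ↑m) * 1 = 2*m - 2 by ring] at hdvd
      have h6 : (0:ℤ) < 2*m - 2 := by linarith only [hm4]
      have := Int.le_of_dvd h6 hdvd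
      linarith only [hm4, this]
    · -- (-1,-1,1)
      exfalso
      rw [show (-1:ℤ) + ↑m * (-1) + ↑m * 1 + (4 * m - 1 - ↑m - ↑m) * 1 = 2*m - 2 by ring] at hdvd
      have h6 : (0:ℤ) < 2*m - 2 := by linarith only [hm4]
      have := Int.le_of_dvd h6 hdvd
      linarith only [hm4, this]
    · -- (-1,-1,-1)
      exfalso
      rw [show (-1:ℤ) + ↑m * (-1) + ↑m * (-1) + (4 * m - 1 - ↑m - ↑m) * 1 = -2 by ring] at hdvd
      rw [dvd_neg] at hdvd
      have := Int.le_of_dvd (by norm_num) hdvd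
      linarith only [hm4, this]
  · rintro (rfl | rfl)
    · refine ⟨isUnit_one, ?_⟩
      intro N hN hNb H0 hle
      rw [map_one]
    · refine ⟨hUnit, ?_⟩
      intro N hN hNb H0 hle
      rw [hmarkA]
      rw [if_neg]
      rintro (⟨g, hg⟩ | ⟨g, hg⟩)
      · exact hnoconj I hI hIc N hN hNb g (hg ▸ hle)
      · exact hnoconj J hJ hJc N hN hNb g (hg ▸ hle)
end

section
/- Let G and H be finite groups, U a finite (H,G)-biset, and a a unit of the Burnside ring B(G). Then T_U(a), characterized by |T_U(a)^T| = ∏_{u ∈ [T\U/G]} |a^{T^u}| for all subgroups T ≤ H, is a unit of B(H). -/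
open MulOpposite

/-- Tensor induction along a finite `(H,G)`-biset `U`, characterized on marks by
`|T_U(a)^T| = ∏_{u ∈ [T\U/G]} |a^(Tᵘ)|`, sends units of `B(G)` to units of `B(H)`. -/
theorem stmt12 {G H U : Type} [Group G] [Group H] [Fintype G] [Fintype H] [Fintype U]
    [MulAction H U] [MulAction Gᵐᵒᵖ U]
    (hcomm : ∀ (h : H) (g : Gᵐᵒᵖ) (u : U), g • (h • u) = h • (g • u))
    (M : BurnsideModel G) (M' : BurnsideModel H)
    (Tu : Subgroup H → U → Subgroup G)
    (hTu : ∀ (T : Subgroup H) (u : U) (g : G), g ∈ Tu T u ↔ ∃ t ∈ T, t • u = op g • u)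
    (R : Subgroup H → Finset U)
    (hR1 : ∀ (T : Subgroup H) (v : U), ∃ u ∈ R T, ∃ t ∈ T, ∃ g : G, t • (op g • v) = u)
    (hR2 : ∀ (T : Subgroup H), ∀ u₁ ∈ R T, ∀ u₂ ∈ R T,
      (∃ t ∈ T, ∃ g : G, t • (op g • u₁) = u₂) → u₁ = u₂)
    (TU : M.carrier → M'.carrier)
    (hTU : ∀ (a : M.carrier) (T : Subgroup H),
      M'.mark T (TU a) = ∏ u ∈ R T, M.mark (Tu T u) a)
    (a : M.carrier) (ha : IsUnit a) :
    IsUnit (TU a) := by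
  obtain ⟨b, hb⟩ := ha.exists_right_inv
  apply IsUnit.of_mul_eq_one (a := TU a) (TU b)
  apply M'.mark_injective
  intro T
  rw [map_mul, map_one, hTU, hTU, ← Finset.prod_mul_distrib]
  rw [Finset.prod_congr rfl (fun u _ => by rw [← map_mul, hb, map_one])]
  simp
end

section
/- Let G be a finite group. For each normal subgroup N ⊴ G define f_N^G = Σ_{M ⊴ G, N ⊆ M} μ_{⊴G}(N, M) e_M^G in the double Burnside algebra ℤB(G×G^op), where μ_{⊴G} is the Möbius function of the poset of normal subgroups of G and e_M^G = Inf_{G/M}^G ∘ Def_{G/M}^G. Then the f_N^G are pairwise orthogonal idempotents whose sum over all N ⊴ G is Id_G. -/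
open scoped Classical

private lemma ite_sum_zero {A : Type*} [AddCommMonoid A] {c : Prop} [Decidable c]
    {ι : Type*} [Fintype ι] (g : ι → A) :
    (if c then ∑ i : ι, g i else 0) = ∑ i : ι, if c then g i else 0 := by
  split_ifs <;> simp

private lemma sum_normal_eq {M : Type*} [AddCommMonoid M] {G : Type*} [Group G]
    [Fintype (Subgroup G)] (g : Subgroup G → M) :
    (∑ K : {N : Subgroup G // N.Normal}, g K.1)
      = ∑ K : Subgroup G, if K.Normal then g K else 0 := by
  rw [← Finset.sum_filter]
  exact (Finset.sum_subtype _ (by simp) g).symm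

/-- In the double Burnside algebra of `G` (modelled by a ring `A` containing the
idempotents `e_M = Inf∘Def` for `M ⊴ G`, which satisfy `e_N * e_M = e_{NM}` and
`e_1 = Id`), the elements `f_N = Σ_{M ⊴ G, N ≤ M} μ_⊴(N,M) e_M`, where `μ_⊴` is
the Möbius function of the poset of normal subgroups, are pairwise orthogonal
idempotents whose sum is the identity. -/
theorem stmt15 {G : Type} [Group G] [Fintype G] [Fintype (Subgroup G)]
    (A : Type) [Ring A]
    (e : Subgroup G → A)
    (he_mul : ∀ N M : Subgroup G, N.Normal → M.Normal → e N * e M = e (N ⊔ M))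
    (he_bot : e ⊥ = 1)
    (mu : Subgroup G → Subgroup G → ℤ)
    (hmu : ∀ N M : Subgroup G, N.Normal → M.Normal → N ≤ M →
      (∑ K : Subgroup G, if K.Normal ∧ N ≤ K ∧ K ≤ M then mu N K else 0) =
        if N = M then 1 else 0)
    (hmu0 : ∀ N M : Subgroup G, ¬ N ≤ M → mu N M = 0)
    (f : Subgroup G → A)
    (hf : ∀ N : Subgroup G,
      f N = ∑ M : Subgroup G, if M.Normal ∧ N ≤ M then mu N M • e M else 0) :
    (∀ N : Subgroup G, N.Normal → f N * f N = f N) ∧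
    (∀ N M : Subgroup G, N.Normal → M.Normal → N ≠ M → f N * f M = 0) ∧
    (∑ N : Subgroup G, if N.Normal then f N else 0) = 1 := by
  -- full-domain version of `hmu`
  have hmuA : ∀ N M : Subgroup G, N.Normal → M.Normal →
      (∑ K : Subgroup G, if K.Normal ∧ N ≤ K ∧ K ≤ M then mu N K else 0) =
        if N = M then 1 else 0 := by
    intro N M hN hM
    by_cases hNM : N ≤ M
    · exact hmu N M hN hM hNM
    · rw [if_neg (by rintro rfl; exact hNM le_rfl)]
      refine Finset.sum_eq_zero fun K _ => ?_
      rw [if_neg]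
      rintro ⟨-, h1, h2⟩
      exact hNM (h1.trans h2)
  -- the matrices
  have hmu' : ∀ N M : Subgroup G, N.Normal → M.Normal →
      (∑ K : Subgroup G, if K.Normal ∧ N ≤ K then mu K M else 0) =
        if N = M then 1 else 0 := by
    intro N M hN hM
    set NS := {N : Subgroup G // N.Normal}
    set Z : Matrix NS NS ℤ := fun P K => if P.1 ≤ K.1 then 1 else 0 with hZ
    set Mu : Matrix NS NS ℤ := fun P K => mu P.1 K.1 with hMu
    have hMZ : Mu * Z = 1 := by
      ext P Q
      rw [Matrix.mul_apply, Matrix.one_apply]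
      have : (∑ K : NS, Mu P K * Z K Q)
          = ∑ K : Subgroup G, if K.Normal ∧ P.1 ≤ K ∧ K ≤ Q.1 then mu P.1 K else 0 := by
        rw [sum_normal_eq (fun K => mu P.1 K * (if K ≤ Q.1 then 1 else 0))]
        refine Finset.sum_congr rfl fun K _ => ?_
        by_cases h1 : K.Normal
        · by_cases h2 : P.1 ≤ K
          · by_cases h3 : K ≤ Q.1 <;> simp [h1, h2, h3]
          · simp [h1, h2, hmu0 _ _ h2]
        · simp [h1]
      rw [this, hmuA P.1 Q.1 P.2 Q.2]
      exact if_congr Subtype.ext_iff.symm rfl rfl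
    have hZM : Z * Mu = 1 := mul_eq_one_comm.mp hMZ
    have := congrFun (congrFun hZM ⟨N, hN⟩) ⟨M, hM⟩
    rw [Matrix.mul_apply, Matrix.one_apply] at this
    rw [sum_normal_eq (fun K => (if N ≤ K then (1:ℤ) else 0) * mu K M)] at this
    have h2 : (∑ K : Subgroup G, if K.Normal ∧ N ≤ K then mu K M else 0)
        = ∑ K : Subgroup G, if K.Normal then (if N ≤ K then (1:ℤ) else 0) * mu K M else 0 := by
      refine Finset.sum_congr rfl fun K _ => ?_
      by_cases h1 : K.Normal
      · by_cases h2 : N ≤ K <;> simp [h1, h2]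
      · simp [h1]
    rw [h2, this]
    simp [Subtype.ext_iff]
  -- Möbius inversion: recover e from f
  have hinv : ∀ N : Subgroup G, N.Normal →
      (∑ K : Subgroup G, if K.Normal ∧ N ≤ K then f K else 0) = e N := by
    intro N hN
    have step : (∑ K : Subgroup G, if K.Normal ∧ N ≤ K then f K else 0)
        = ∑ L : Subgroup G, ∑ K : Subgroup G,
            if K.Normal ∧ N ≤ K then (if L.Normal ∧ K ≤ L then mu K L • e L else 0) else 0 := by
      rw [Finset.sum_comm]
      refine Finset.sum_congr rfl fun K _ => ?_
      rw [hf K, ite_sum_zero]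
    rw [step]
    have step2 : ∀ L : Subgroup G,
        (∑ K : Subgroup G,
            if K.Normal ∧ N ≤ K then (if L.Normal ∧ K ≤ L then mu K L • e L else 0) else 0)
          = if L.Normal then (∑ K : Subgroup G, if K.Normal ∧ N ≤ K then mu K L else 0) • e L
            else 0 := by
      intro L
      rw [Finset.sum_smul, ite_sum_zero]
      refine Finset.sum_congr rfl fun K _ => ?_
      by_cases h1 : K.Normal ∧ N ≤ K
      · by_cases h2 : L.Normal
        · by_cases h3 : K ≤ L
          · simp [h1, h2, h3]
          · simp [h1, h2, h3, hmu0 _ _ h3]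
        · simp [h1, h2]
      · by_cases h2 : L.Normal <;> simp [h1, h2]
    calc (∑ L : Subgroup G, ∑ K : Subgroup G,
            if K.Normal ∧ N ≤ K then (if L.Normal ∧ K ≤ L then mu K L • e L else 0) else 0)
        = ∑ L : Subgroup G, if N = L then e L else 0 := by
          refine Finset.sum_congr rfl fun L _ => ?_
          rw [step2 L]
          by_cases h2 : L.Normal
          · rw [if_pos h2, hmu' N L hN h2]
            by_cases h3 : N = L <;> simp [h3]
          · rw [if_neg h2, if_neg (by rintro rfl; exact h2 hN)]
      _ = e N := by simp
  -- f N * e Q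
  have hfe : ∀ N Q : Subgroup G, N.Normal → Q.Normal →
      f N * e Q = if Q ≤ N then f N else 0 := by
    intro N Q hN hQ
    have step1 : f N * e Q = ∑ K : Subgroup G,
        if K.Normal ∧ N ≤ K then mu N K • e (K ⊔ Q) else 0 := by
      rw [hf N, Finset.sum_mul]
      refine Finset.sum_congr rfl fun K _ => ?_
      by_cases h : K.Normal ∧ N ≤ K
      · rw [if_pos h, if_pos h, smul_mul_assoc, he_mul K Q h.1 hQ]
      · rw [if_neg h, if_neg h, zero_mul]
    have step2 : ∀ K : Subgroup G, K.Normal →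
        e (K ⊔ Q) = ∑ P : Subgroup G, if P.Normal ∧ K ≤ P ∧ Q ≤ P then f P else 0 := by
      intro K hK
      haveI := hK; haveI := hQ
      rw [← hinv (K ⊔ Q) (Subgroup.sup_normal K Q)]
      refine Finset.sum_congr rfl fun P _ => ?_
      refine if_congr ?_ rfl rfl
      rw [sup_le_iff]
    have step3 : f N * e Q = ∑ P : Subgroup G, ∑ K : Subgroup G,
        if P.Normal ∧ Q ≤ P then
          (if K.Normal ∧ N ≤ K ∧ K ≤ P then mu N K else 0) • f P else 0 := by
      rw [step1, Finset.sum_comm]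
      refine Finset.sum_congr rfl fun K _ => ?_
      by_cases h : K.Normal ∧ N ≤ K
      · rw [if_pos h, step2 K h.1, Finset.smul_sum]
        refine Finset.sum_congr rfl fun P _ => ?_
        by_cases h1 : P.Normal
        · by_cases h2 : Q ≤ P
          · by_cases h3 : K ≤ P <;> simp [h, h1, h2, h3]
          · simp [h1, h2]
        · simp [h1]
      · rw [if_neg h]
        refine (Finset.sum_eq_zero fun P _ => ?_).symm
        by_cases h1 : P.Normal ∧ Q ≤ P
        · rw [if_pos h1, if_neg (by tauto), zero_smul]
        · rw [if_neg h1]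
    rw [step3]
    calc (∑ P : Subgroup G, ∑ K : Subgroup G,
        if P.Normal ∧ Q ≤ P then
          (if K.Normal ∧ N ≤ K ∧ K ≤ P then mu N K else 0) • f P else 0)
        = ∑ P : Subgroup G, if N = P then (if Q ≤ P then f P else 0) else 0 := by
          refine Finset.sum_congr rfl fun P _ => ?_
          rw [← ite_sum_zero, ← Finset.sum_smul]
          by_cases h1 : P.Normal
          · rw [hmuA N P hN h1]
            by_cases h2 : N = P
            · subst h2
              by_cases h3 : Q ≤ N <;> simp [h1, h3]
            · simp [h2]
          · rw [if_neg (by tauto), if_neg (by rintro rfl; exact h1 hN)]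
      _ = if Q ≤ N then f N else 0 := by simp
  -- the key multiplication formula
  have hmul : ∀ N M : Subgroup G, N.Normal → M.Normal →
      f N * f M = if N = M then f N else 0 := by
    intro N M hN hM
    have : f N * f M
        = (∑ L : Subgroup G, if L.Normal ∧ M ≤ L ∧ L ≤ N then mu M L else 0) • f N := by
      rw [hf M, Finset.mul_sum, Finset.sum_smul]
      refine Finset.sum_congr rfl fun L _ => ?_
      by_cases h1 : L.Normal ∧ M ≤ L
      · rw [if_pos h1, mul_smul_comm, hfe N L hN h1.1]
        by_cases h2 : L ≤ N
        · rw [if_pos h2, if_pos (show L.Normal ∧ M ≤ L ∧ L ≤ N by tauto)]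
        · rw [if_neg h2, if_neg (by tauto), smul_zero, zero_smul]
      · rw [if_neg h1, if_neg (by tauto), mul_zero, zero_smul]
    rw [this, hmuA M N hM hN]
    by_cases h : N = M
    · subst h; simp
    · rw [if_neg (fun a => h a.symm), if_neg h, zero_smul]
  refine ⟨fun N hN => by rw [hmul N N hN hN, if_pos rfl],
    fun N M hN hM hNM => by rw [hmul N M hN hM, if_neg hNM], ?_⟩
  have := hinv ⊥ inferInstance
  rw [← he_bot, ← this]
  refine Finset.sum_congr rfl fun N _ => ?_
  simp
end

section
/- Let G be a finite group and N a nontrivial normal subgroup of G. Then in the double Burnside algebra, f_1^G ∘ Inf_{G/N}^G = 0 and Def_{G/N}^G ∘ f_1^G = 0, where f_1^G = Σ_{M ⊴ G} μ_{⊴G}(1, M) e_M^G. -/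
open scoped Classical

/-- If `N` is a nontrivial normal subgroup of `G`, then in the (category algebra of
the) double Burnside category — modelled by a ring `A` containing inflations
`Inf M`, deflations `Def M` and the identities `π M` of the objects `G/M`, with
`Def M * Inf M = π M`, `e M := Inf M * Def M`, `e N * e M = e (N ⊔ M)` and
`e ⊥ = π ⊥ = Id_G` — one has `f₁ * Inf N = 0` and `Def N * f₁ = 0`, where
`f₁ = Σ_{M ⊴ G} μ_⊴(⊥, M) e M`. -/
theorem stmt16 {G : Type} [Group G] [Fintype G] [Fintype (Subgroup G)]
    (A : Type) [Ring A]
    (Inf Def pi : Subgroup G → A)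
    (hDI : ∀ M : Subgroup G, M.Normal → Def M * Inf M = pi M)
    (hIpi : ∀ M : Subgroup G, M.Normal → Inf M * pi M = Inf M)
    (hpiD : ∀ M : Subgroup G, M.Normal → pi M * Def M = Def M)
    (hpiI : ∀ M : Subgroup G, M.Normal → pi ⊥ * Inf M = Inf M)
    (hDpi : ∀ M : Subgroup G, M.Normal → Def M * pi ⊥ = Def M)
    (e : Subgroup G → A)
    (he : ∀ M : Subgroup G, e M = Inf M * Def M)
    (he_mul : ∀ N M : Subgroup G, N.Normal → M.Normal → e N * e M = e (N ⊔ M))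
    (he_bot : e ⊥ = pi ⊥)
    (mu : Subgroup G → Subgroup G → ℤ)
    (hmu : ∀ N M : Subgroup G, N.Normal → M.Normal → N ≤ M →
      (∑ K : Subgroup G, if K.Normal ∧ N ≤ K ∧ K ≤ M then mu N K else 0) =
        if N = M then 1 else 0)
    (hmu0 : ∀ N M : Subgroup G, ¬ N ≤ M → mu N M = 0)
    (f1 : A)
    (hf1 : f1 = ∑ M : Subgroup G, if M.Normal then mu ⊥ M • e M else 0)
    (N : Subgroup G) (hN : N.Normal) (hNbot : N ≠ ⊥) :
    f1 * Inf N = 0 ∧ Def N * f1 = 0 := by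
  classical
  have hbot : (⊥ : Subgroup G).Normal := inferInstance
  set g : Subgroup G → ℤ :=
    fun K => ∑ M : Subgroup G, if M.Normal ∧ M ⊔ N = K then mu ⊥ M else 0 with hg
  -- Claim A: summing g over the interval [N, K] gives 0 for normal K ≥ N
  have claimA : ∀ K : Subgroup G, K.Normal → N ≤ K →
      (∑ K' : Subgroup G, if K'.Normal ∧ N ≤ K' ∧ K' ≤ K then g K' else 0) = 0 := by
    intro K hK hNK
    have hKbot : (⊥ : Subgroup G) ≠ K := by
      intro h
      exact hNbot (le_bot_iff.mp (h ▸ hNK))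
    have h1 : (∑ K' : Subgroup G, if K'.Normal ∧ N ≤ K' ∧ K' ≤ K then g K' else 0)
        = ∑ K' : Subgroup G, ∑ M : Subgroup G,
            if (M.Normal ∧ M ⊔ N = K') ∧ (K'.Normal ∧ N ≤ K' ∧ K' ≤ K) then mu ⊥ M else 0 := by
      apply Finset.sum_congr rfl
      intro K' _
      by_cases h : K'.Normal ∧ N ≤ K' ∧ K' ≤ K
      · rw [if_pos h, hg]
        apply Finset.sum_congr rfl
        intro M _
        by_cases hM : M.Normal ∧ M ⊔ N = K'
        · rw [if_pos hM, if_pos ⟨hM, h⟩]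
        · rw [if_neg hM, if_neg (fun hc => hM hc.1)]
      · rw [if_neg h]
        symm
        apply Finset.sum_eq_zero
        intro M _
        rw [if_neg (fun hc => h hc.2)]
    rw [h1, Finset.sum_comm]
    have h2 : ∀ M : Subgroup G,
        (∑ K' : Subgroup G,
          if (M.Normal ∧ M ⊔ N = K') ∧ (K'.Normal ∧ N ≤ K' ∧ K' ≤ K) then mu ⊥ M else 0)
        = if M.Normal ∧ ⊥ ≤ M ∧ M ≤ K then mu ⊥ M else 0 := by
      intro M
      by_cases hM : M.Normal ∧ M ≤ K
      · rw [if_pos ⟨hM.1, bot_le, hM.2⟩]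
        rw [Finset.sum_eq_single (M ⊔ N)]
        · rw [if_pos]
          have := hM.1
          exact ⟨⟨hM.1, rfl⟩, @Subgroup.sup_normal G _ M N hM.1 hN, le_sup_right,
            sup_le hM.2 hNK⟩
        · intro b _ hb
          rw [if_neg]
          rintro ⟨⟨_, rfl⟩, _⟩
          exact hb rfl
        · intro h
          exact absurd (Finset.mem_univ _) h
      · rw [if_neg (fun hc => hM ⟨hc.1, hc.2.2⟩)]
        apply Finset.sum_eq_zero
        intro b _
        rw [if_neg]
        rintro ⟨⟨hb1, rfl⟩, _, _, hb4⟩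
        exact hM ⟨hb1, le_trans le_sup_left hb4⟩
    rw [Finset.sum_congr rfl (fun M _ => h2 M), hmu ⊥ K hbot hK bot_le, if_neg hKbot]
  -- Claim B: g K = 0 for all normal K ≥ N (Weisner's theorem)
  have claimB : ∀ K : Subgroup G, K.Normal → N ≤ K → g K = 0 := by
    intro K
    induction K using WellFoundedLT.induction with
    | _ K ih =>
      intro hK hNK
      have hA := claimA K hK hNK
      rw [Finset.sum_eq_single K] at hA
      · rw [if_pos ⟨hK, hNK, le_refl K⟩] at hA
        exact hA
      · intro b _ hb
        by_cases h : b.Normal ∧ N ≤ b ∧ b ≤ K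
        · rw [if_pos h]
          exact ih b (lt_of_le_of_ne h.2.2 hb) h.1 h.2.1
        · rw [if_neg h]
      · intro h
        exact absurd (Finset.mem_univ _) h
  -- Main sum vanishes
  have main : (∑ M : Subgroup G, if M.Normal then mu ⊥ M • e (M ⊔ N) else 0) = (0 : A) := by
    have hterm : ∀ M : Subgroup G, (if M.Normal then mu ⊥ M • e (M ⊔ N) else 0)
        = ∑ K : Subgroup G, if M.Normal ∧ M ⊔ N = K then mu ⊥ M • e K else 0 := by
      intro M
      rw [Finset.sum_eq_single (M ⊔ N)]
      · by_cases hM : M.Normal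
        · rw [if_pos hM, if_pos ⟨hM, rfl⟩]
        · rw [if_neg hM, if_neg (fun hc => hM hc.1)]
      · intro b _ hb
        rw [if_neg]
        rintro ⟨_, rfl⟩
        exact hb rfl
      · intro h
        exact absurd (Finset.mem_univ _) h
    rw [Finset.sum_congr rfl (fun M _ => hterm M), Finset.sum_comm]
    apply Finset.sum_eq_zero
    intro K _
    by_cases hK : K.Normal ∧ N ≤ K
    · have hinner : (∑ M : Subgroup G, if M.Normal ∧ M ⊔ N = K then mu ⊥ M • e K else 0)
          = g K • e K := by
        rw [hg, Finset.sum_smul]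
        apply Finset.sum_congr rfl
        intro M _
        by_cases hM : M.Normal ∧ M ⊔ N = K
        · rw [if_pos hM, if_pos hM]
        · rw [if_neg hM, if_neg hM, zero_smul]
      rw [hinner, claimB K hK.1 hK.2, zero_smul]
    · apply Finset.sum_eq_zero
      intro M _
      rw [if_neg]
      rintro ⟨hM, rfl⟩
      exact hK ⟨@Subgroup.sup_normal G _ M N hM hN, le_sup_right⟩
  constructor
  · -- f1 * Inf N = 0
    have hInf : e N * Inf N = Inf N := by
      rw [he N, mul_assoc, hDI N hN, hIpi N hN]
    have hfe : f1 * e N = 0 := by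
      rw [hf1, Finset.sum_mul]
      have heq : (∑ M : Subgroup G, (if M.Normal then mu ⊥ M • e M else 0) * e N)
          = ∑ M : Subgroup G, if M.Normal then mu ⊥ M • e (M ⊔ N) else 0 := by
        apply Finset.sum_congr rfl
        intro M _
        by_cases hM : M.Normal
        · rw [if_pos hM, if_pos hM, smul_mul_assoc, he_mul M N hM hN]
        · rw [if_neg hM, if_neg hM, zero_mul]
      rw [heq, main]
    calc f1 * Inf N = f1 * e N * Inf N := by rw [mul_assoc, hInf]
      _ = 0 := by rw [hfe, zero_mul]
  · -- Def N * f1 = 0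
    have hDef : Def N * e N = Def N := by
      rw [he N, ← mul_assoc, hDI N hN, hpiD N hN]
    have hef : e N * f1 = 0 := by
      rw [hf1, Finset.mul_sum]
      have heq : (∑ M : Subgroup G, e N * (if M.Normal then mu ⊥ M • e M else 0))
          = ∑ M : Subgroup G, if M.Normal then mu ⊥ M • e (M ⊔ N) else 0 := by
        apply Finset.sum_congr rfl
        intro M _
        by_cases hM : M.Normal
        · rw [if_pos hM, if_pos hM, mul_smul_comm, he_mul N M hN hM, sup_comm]
        · rw [if_neg hM, if_neg hM, mul_zero]
      rw [heq, main]
    calc Def N * f1 = Def N * (e N * f1) := by rw [← mul_assoc, hDef]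
      _ = 0 := by rw [hef, mul_zero]
end

section
/- Let P be a finite p-group. Then f_1^P = Σ_{N ≤ Ω₁Z(P)} μ(1, N) [P/N] in the double Burnside algebra, where μ is the Möbius function of the subgroup lattice, Ω₁Z(P) is the subgroup of central elements of order dividing p, and [P/N] denotes the (P,P)-biset P/N (equal to Inf∘Def through P/N). -/
open scoped Classical

-- Step B: normal nontrivial subgroup of a p-group meets Ω₁Z(P)
lemma stepB {p : ℕ} (hp : p.Prime) {P : Type} [Group P] [Fintype P]
    (hP : IsPGroup p P) (Ω : Subgroup P)
    (hΩ : ∀ x : P, x ∈ Ω ↔ x ∈ Subgroup.center P ∧ x ^ p = 1)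
    (M : Subgroup P) (hM : M.Normal) (hMbot : M ≠ ⊥) : M ⊓ Ω ≠ ⊥ := by
  haveI := hM
  haveI : Fact p.Prime := ⟨hp⟩
  have hM' : IsPGroup p M := hP.to_subgroup M
  haveI : Nontrivial M := M.nontrivial_iff_ne_bot.mpr hMbot
  obtain ⟨n, hn0, hcard⟩ := hM'.nontrivial_iff_card.mp inferInstance
  have hdvd : p ∣ Nat.card M := hcard ▸ dvd_pow_self p hn0.ne'
  have hG : IsPGroup p (ConjAct P) := hP.of_equiv ConjAct.toConjAct
  have h1 : (1 : M) ∈ MulAction.fixedPoints (ConjAct P) M := fun g => smul_one g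
  obtain ⟨b, hbfix, hb1⟩ :=
    hG.exists_fixed_point_of_prime_dvd_card_of_fixed_point (α := M) hdvd h1
  have hbcenter : (b : P) ∈ Subgroup.center P := by
    rw [Subgroup.mem_center_iff]
    intro g
    have := hbfix (ConjAct.toConjAct g)
    have hval : g * (b : P) * g⁻¹ = (b : P) := congrArg Subtype.val this
    calc g * (b : P) = (g * b * g⁻¹) * g := by group
    _ = (b : P) * g := by rw [hval]
  have hbne : (b : P) ≠ 1 := by
    intro h; exact hb1 (Subtype.ext h.symm)
  -- find order
  obtain ⟨k, hk⟩ := hP (b : P)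
  have hord : orderOf (b : P) ∣ p ^ k := orderOf_dvd_of_pow_eq_one hk
  obtain ⟨j, hjk, hj⟩ := (Nat.dvd_prime_pow hp).mp hord
  have hj0 : j ≠ 0 := by
    rintro rfl
    rw [pow_zero] at hj
    exact hbne (orderOf_eq_one_iff.mp hj)
  set y : P := (b : P) ^ (p ^ (j - 1)) with hy
  have hyp : y ^ p = 1 := by
    rw [hy, ← pow_mul, ← pow_succ, Nat.sub_add_cancel (Nat.one_le_iff_ne_zero.mpr hj0), ← hj]
    exact pow_orderOf_eq_one _
  have hyne : y ≠ 1 := by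
    intro h
    have := orderOf_dvd_iff_pow_eq_one.mpr h
    rw [hj] at this
    have := Nat.le_of_dvd (pow_pos hp.pos _) this
    have hlt : p ^ (j - 1) < p ^ j :=
      Nat.pow_lt_pow_right hp.one_lt (Nat.sub_lt (Nat.pos_of_ne_zero hj0) one_pos)
    omega
  have hyM : y ∈ M := M.pow_mem b.2 _
  have hyΩ : y ∈ Ω := (hΩ y).mpr ⟨Subgroup.pow_mem _ hbcenter _, hyp⟩
  intro hbot
  have : y ∈ (⊥ : Subgroup P) := hbot ▸ (Subgroup.mem_inf.mpr ⟨hyM, hyΩ⟩)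
  exact hyne (Subgroup.mem_bot.mp this)


lemma stepA' {P : Type} [Group P] {Ω : Subgroup P}
    (hΩc : Ω ≤ Subgroup.center P)
    (K : Subgroup P) (hK : K ≤ Ω) : K.Normal := by
  constructor
  intro n hn g
  have hc : n ∈ Subgroup.center P := hΩc (hK hn)
  have : g * n * g⁻¹ = n := by
    rw [Subgroup.mem_center_iff] at hc
    rw [hc g]; group
  rwa [this]

/-- For a finite `p`-group `P`,
`f₁^P = Σ_{N ≤ Ω₁Z(P)} μ(1,N) [P/N]` in the double Burnside algebra: the formal
`ℤ`-linear combination `Σ_{M ⊴ P} μ_⊴(1,M) [P/M]` (with `μ_⊴` the Möbius function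
of the poset of normal subgroups) equals `Σ_{N ≤ Ω₁Z(P)} μ(1,N) [P/N]` (with `μ`
the Möbius function of the full subgroup lattice), where `Ω₁Z(P)` is the subgroup
of central elements of order dividing `p`. Equality is stated in the free
`ℤ`-module on the classes `[P/N]` of the `(P,P)`-bisets `P/N`. -/
theorem stmt17 {p : ℕ} (hp : p.Prime) {P : Type} [Group P] [Fintype P]
    [Fintype (Subgroup P)] (hP : IsPGroup p P)
    (muN : Subgroup P → Subgroup P → ℤ)
    (hmuN : ∀ N M : Subgroup P, N.Normal → M.Normal → N ≤ M →
      (∑ K : Subgroup P, if K.Normal ∧ N ≤ K ∧ K ≤ M then muN N K else 0) =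
        if N = M then 1 else 0)
    (hmuN0 : ∀ N M : Subgroup P, ¬ N ≤ M → muN N M = 0)
    (mu : Subgroup P → Subgroup P → ℤ)
    (hmu : ∀ N M : Subgroup P, N ≤ M →
      (∑ K : Subgroup P, if N ≤ K ∧ K ≤ M then mu N K else 0) =
        if N = M then 1 else 0)
    (hmu0 : ∀ N M : Subgroup P, ¬ N ≤ M → mu N M = 0)
    (Ω : Subgroup P)
    (hΩ : ∀ x : P, x ∈ Ω ↔ x ∈ Subgroup.center P ∧ x ^ p = 1) :
    (∑ M : Subgroup P, if M.Normal then Finsupp.single M (muN ⊥ M) else 0) =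
      (∑ N : Subgroup P, if N ≤ Ω then Finsupp.single N (mu ⊥ N)
        else (0 : Subgroup P →₀ ℤ)) := by
  classical
  have hΩc : Ω ≤ Subgroup.center P := fun x hx => ((hΩ x).mp hx).1
  set G : Subgroup P → ℤ := fun M => if M ≤ Ω then mu ⊥ M else 0 with hG
  have stepC : ∀ M : Subgroup P, M.Normal →
      (∑ K : Subgroup P, if K.Normal ∧ (⊥:Subgroup P) ≤ K ∧ K ≤ M then G K else 0) =
        if (⊥:Subgroup P) = M then 1 else 0 := by
    intro M hM
    have h1 : (∑ K : Subgroup P, if K.Normal ∧ (⊥:Subgroup P) ≤ K ∧ K ≤ M then G K else 0)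
        = ∑ K : Subgroup P, if (⊥:Subgroup P) ≤ K ∧ K ≤ M ⊓ Ω then mu ⊥ K else 0 := by
      apply Finset.sum_congr rfl
      intro K _
      by_cases hKΩ : K ≤ Ω
      · have hKn : K.Normal := stepA' hΩc K hKΩ
        by_cases hKM : K ≤ M
        · simp [hG, hKΩ, hKn, hKM, le_inf hKM hKΩ, bot_le]
        · have hni : ¬ K ≤ M ⊓ Ω := fun h => hKM (h.trans inf_le_left)
          simp [hKn, hKM, hni]
      · have hni : ¬ K ≤ M ⊓ Ω := fun h => hKΩ (h.trans inf_le_right)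
        simp [hG, hKΩ, hni]
    rw [h1, hmu ⊥ (M ⊓ Ω) bot_le]
    by_cases hMbot : M = ⊥
    · subst hMbot; simp
    · have h2 : M ⊓ Ω ≠ ⊥ := stepB hp hP Ω hΩ M hM hMbot
      rw [if_neg (fun h => h2 h.symm), if_neg (fun h => hMbot h.symm)]
  have stepD : ∀ M : Subgroup P, M.Normal → muN ⊥ M = G M := by
    intro M
    induction M using WellFoundedLT.induction with
    | ind M ih =>
      intro hM
      have h1 := hmuN ⊥ M inferInstance hM bot_le
      have h2 := stepC M hM
      have h3 : (∑ K : Subgroup P,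
          if K.Normal ∧ (⊥:Subgroup P) ≤ K ∧ K ≤ M then muN ⊥ K - G K else 0) = 0 := by
        have heach : ∀ K : Subgroup P,
            (if K.Normal ∧ (⊥:Subgroup P) ≤ K ∧ K ≤ M then muN ⊥ K - G K else 0) =
            (if K.Normal ∧ (⊥:Subgroup P) ≤ K ∧ K ≤ M then muN ⊥ K else 0) -
            (if K.Normal ∧ (⊥:Subgroup P) ≤ K ∧ K ≤ M then G K else 0) := by
          intro K; split <;> simp
        simp only [heach, Finset.sum_sub_distrib, h1, h2, sub_self]
      have h4 : (∑ K : Subgroup P,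
          if K.Normal ∧ (⊥:Subgroup P) ≤ K ∧ K ≤ M then muN ⊥ K - G K else 0) =
          (if M.Normal ∧ (⊥:Subgroup P) ≤ M ∧ M ≤ M then muN ⊥ M - G M else 0) := by
        apply Finset.sum_eq_single M
        · intro K _ hKM
          split
          · next h =>
            have hlt : K < M := lt_of_le_of_ne h.2.2 hKM
            rw [ih K hlt h.1, sub_self]
          · rfl
        · intro h; exact absurd (Finset.mem_univ M) h
      rw [h4, if_pos ⟨hM, bot_le, le_refl M⟩] at h3
      linarith
  apply Finset.sum_congr rfl
  intro M _
  by_cases hMn : M.Normal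
  · rw [if_pos hMn, stepD M hMn]
    by_cases hMΩ : M ≤ Ω
    · simp [hG, hMΩ]
    · simp [hG, hMΩ]
  · rw [if_neg hMn, if_neg (fun h => hMn (stepA' hΩc M h))]
end

section
/- Let P be a finite abelian 2-group. Then B^×(P) is an elementary abelian 2-group of rank equal to 1 plus the number of subgroups of index 2 in P. -/
open Classical in
lemma fixedCard_eq_s18 {G : Type} [CommGroup G] (H K : Subgroup G) :
    fixedCard H K = if K ≤ H then (H.index : ℤ) else 0 := by
  unfold fixedCard
  by_cases h : K ≤ H
  · rw [if_pos h]
    have hall : ∀ x : G ⧸ H, ∀ k ∈ K, k • x = x := by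
      intro x
      induction x using QuotientGroup.induction_on with
      | H g =>
        intro k hk
        rw [MulAction.Quotient.smul_mk, QuotientGroup.eq]
        simpa [mul_comm, smul_eq_mul, mul_assoc] using h hk
    rw [Subgroup.index_eq_card]
    norm_cast
    exact Nat.card_eq_of_bijective (fun x => x.1)
      ⟨fun a b hab => Subtype.ext hab, fun x => ⟨⟨x, hall x⟩, rfl⟩⟩
  · rw [if_neg h]
    obtain ⟨k, hkK, hkH⟩ := SetLike.not_le_iff_exists.mp h
    have : IsEmpty {x : G ⧸ H // ∀ k ∈ K, k • x = x} := by
      constructor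
      rintro ⟨x, hx⟩
      induction x using QuotientGroup.induction_on with
      | H g =>
        have := hx k hkK
        rw [MulAction.Quotient.smul_mk, QuotientGroup.eq] at this
        exact hkH (by simpa [mul_comm, smul_eq_mul, mul_assoc] using this)
    simp [Nat.card_of_isEmpty]

lemma index2_le {G : Type} [Group G] {H K : Subgroup G} (hH : H.index = 2)
    (hK : K.index = 2) (h : K ≤ H) : K = H := by
  have := Subgroup.relIndex_mul_index h
  rw [hH, hK] at this
  have h1 : K.relIndex H = 1 := by omega
  exact le_antisymm h (Subgroup.relIndex_eq_one.mp h1)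

section Aux
variable {P : Type} [CommGroup P] [Fintype P]

lemma aux_dich (hP : IsPGroup 2 P) (H : Subgroup P) :
    H = ⊤ ∨ H.index = 2 ∨ 4 ∣ H.index := by
  haveI : Fact (Nat.Prime 2) := ⟨Nat.prime_two⟩
  obtain ⟨k, hk⟩ := IsPGroup.iff_card.mp hP
  have hdvd : H.index ∣ 2 ^ k := by rw [← hk]; exact H.index_dvd_card
  obtain ⟨m, hm, heq⟩ := (Nat.dvd_prime_pow Nat.prime_two).mp hdvd
  match m, heq with
  | 0, heq => exact Or.inl (Subgroup.index_eq_one.mp (by simpa using heq))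
  | 1, heq => exact Or.inr (Or.inl (by simpa using heq))
  | (m+2), heq =>
    refine Or.inr (Or.inr ⟨2^m, ?_⟩)
    rw [heq]; ring

open Classical in
lemma aux_markSum [Fintype (Subgroup P)] (M : BurnsideModel P) (n : Subgroup P →₀ ℤ)
    (K : Subgroup P) :
    M.mark K (n.sum fun H c => c • M.bas H) =
      ∑ H : Subgroup P, n H * (if K ≤ H then (H.index : ℤ) else 0) := by
  rw [map_finsuppSum, Finsupp.sum_fintype]
  · refine Finset.sum_congr rfl fun H _ => ?_
    rw [map_zsmul, M.mark_bas, fixedCard_eq_s18, zsmul_eq_mul]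
    simp
  · intro H; simp

open Classical in
lemma aux_congr (hP : IsPGroup 2 P) [Fintype (Subgroup P)] (n : Subgroup P →₀ ℤ)
    (K : Subgroup P) :
    (4:ℤ) ∣ (∑ H : Subgroup P, n H * (if K ≤ H then (H.index : ℤ) else 0)) -
      (n ⊤ + 2 * ∑ H ∈ Finset.univ.filter (fun H : Subgroup P => H.index = 2 ∧ K ≤ H), n H) := by
  have h1 : ∑ H : Subgroup P, (n H : ℤ) * (if H = ⊤ then 1 else 0) = n ⊤ := by
    simp [mul_ite]
  have h2 : ∑ H : Subgroup P, (n H : ℤ) * (if H.index = 2 ∧ K ≤ H then 2 else 0)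
      = 2 * ∑ H ∈ Finset.univ.filter (fun H : Subgroup P => H.index = 2 ∧ K ≤ H), n H := by
    rw [Finset.sum_filter, Finset.mul_sum]
    refine Finset.sum_congr rfl fun H _ => ?_
    by_cases h : H.index = 2 ∧ K ≤ H <;> simp [h] <;> ring
  have hsplit : (n ⊤ : ℤ) + 2 * ∑ H ∈ Finset.univ.filter (fun H : Subgroup P => H.index = 2 ∧ K ≤ H), n H
      = ∑ H : Subgroup P, n H * ((if H = ⊤ then 1 else 0) + (if H.index = 2 ∧ K ≤ H then 2 else 0)) := by
    simp only [mul_add, Finset.sum_add_distrib, h1, h2]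
  rw [hsplit, ← Finset.sum_sub_distrib]
  refine Finset.dvd_sum fun H _ => ?_
  rw [← mul_sub]
  refine Dvd.dvd.mul_left ?_ _
  rcases aux_dich hP H with hT | h2' | h4
  · subst hT
    have hne : ¬((⊤:Subgroup P).index = 2 ∧ K ≤ ⊤) := by simp [Subgroup.index_top]
    simp [Subgroup.index_top, le_top, hne]
  · have hT : H ≠ ⊤ := fun h => by simp [h, Subgroup.index_top] at h2'
    by_cases hK : K ≤ H
    · simp [h2', hK, hT]
    · simp [hK, hT]
  · have hT : H ≠ ⊤ := by rintro rfl; rw [Subgroup.index_top] at h4; omega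
    have h2' : H.index ≠ 2 := fun h => by rw [h] at h4; omega
    by_cases hK : K ≤ H
    · simpa [hK, hT, h2'] using (Int.natCast_dvd_natCast.mpr h4 : (4:ℤ) ∣ (H.index:ℤ))
    · simp [hK, hT, h2']

end Aux

lemma aux_parity {u v S : ℤ} (hu : u = 1 ∨ u = -1) (hv : v = 1 ∨ v = -1)
    (h : (4:ℤ) ∣ u - (v + 2 * S)) : (u = v ↔ Even S) := by
  rcases hu with rfl | rfl <;> rcases hv with rfl | rfl <;>
    rw [Int.even_iff] <;> omega

lemma pm_eq {x y : ℤ} (hx : x = 1 ∨ x = -1) (hy : y = 1 ∨ y = -1)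
    (h : x ≠ y) : x = -y := by rcases hx with rfl|rfl <;> rcases hy with rfl|rfl <;> omega

/-- Matsuda's theorem: if `P` is a finite abelian `2`-group, then `B^×(P)` is an
elementary abelian `2`-group of rank `1` plus the number of subgroups of index `2`
in `P`. -/
theorem stmt18 {P : Type} [CommGroup P] [Fintype P] (hP : IsPGroup 2 P)
    (M : BurnsideModel P) :
    (∀ a : M.carrier, IsUnit a → a * a = 1) ∧
    Nat.card {a : M.carrier // IsUnit a} =
      2 ^ (1 + Nat.card {H : Subgroup P // H.index = 2}) := by
  classical
  haveI : Finite (Subgroup P) :=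
    Finite.of_injective (fun H : Subgroup P => (H : Set P)) SetLike.coe_injective
  letI : Fintype (Subgroup P) := Fintype.ofFinite _
  have hsign : ∀ (a : M.carrier), IsUnit a → ∀ K, M.mark K a = 1 ∨ M.mark K a = -1 :=
    fun a ha K => Int.isUnit_iff.mp (ha.map (M.mark K))
  have part1 : ∀ a : M.carrier, IsUnit a → a * a = 1 := by
    intro a ha
    apply M.mark_injective
    intro K
    rw [map_mul, map_one]
    rcases hsign a ha K with h | h <;> rw [h] <;> norm_num
  refine ⟨part1, ?_⟩
  -- notation
  set F : Subgroup P → Finset (Subgroup P) :=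
    fun K => Finset.univ.filter (fun H : Subgroup P => H.index = 2 ∧ K ≤ H) with hF
  -- key formula
  have key : ∀ (a : M.carrier) (n : Subgroup P →₀ ℤ),
      a = n.sum (fun H c => c • M.bas H) → IsUnit a → ∀ K : Subgroup P,
      (M.mark K a = M.mark ⊤ a ↔ Even (∑ H ∈ F K, n H)) := by
    intro a n hn ha K
    have hmk : M.mark K a = ∑ H : Subgroup P, n H * (if K ≤ H then (H.index : ℤ) else 0) := by
      rw [hn, aux_markSum]
    have hmT : M.mark ⊤ a
        = ∑ H : Subgroup P, n H * (if (⊤ : Subgroup P) ≤ H then (H.index : ℤ) else 0) := by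
      rw [hn, aux_markSum]
    have hK := aux_congr hP n K
    have hT := aux_congr hP n ⊤
    have hST : ∑ H ∈ F ⊤, n H = 0 := by
      apply Finset.sum_eq_zero
      intro H hH
      rw [hF, Finset.mem_filter] at hH
      exfalso
      have hHtop : H = ⊤ := top_le_iff.mp hH.2.2
      rw [hHtop, Subgroup.index_top] at hH
      exact absurd hH.2.1 (by norm_num)
    rw [← hmk] at hK
    rw [← hmT, hST] at hT
    exact aux_parity (hsign a ha K) (hsign a ha ⊤) (by simp only [hF] at hK hT ⊢; omega)
  have key2 : ∀ (a : M.carrier) (n : Subgroup P →₀ ℤ),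
      a = n.sum (fun H c => c • M.bas H) → IsUnit a → ∀ (H' : Subgroup P), H'.index = 2 →
      (M.mark H' a = M.mark ⊤ a ↔ Even (n H')) := by
    intro a n hn ha H' h2
    have hsingle : F H' = {H'} := by
      ext H
      simp only [hF, Finset.mem_filter, Finset.mem_singleton, Finset.mem_univ, true_and]
      constructor
      · rintro ⟨hH2, hle⟩
        exact (index2_le hH2 h2 hle).symm
      · rintro rfl
        exact ⟨h2, le_refl _⟩
    have := key a n hn ha H'
    rwa [hsingle, Finset.sum_singleton] at this
  -- the bijection
  set I := {H : Subgroup P // H.index = 2} with hI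
  set Φ : {a : M.carrier // IsUnit a} → Bool × (I → Bool) :=
    fun a => (decide (M.mark ⊤ a.1 = 1),
      fun H => decide (M.mark H.1 a.1 = M.mark ⊤ a.1)) with hPhi
  have hrep : ∀ a : M.carrier, ∃ n : Subgroup P →₀ ℤ,
      a = n.sum fun H c => c • M.bas H := by
    intro a
    obtain ⟨n, hn⟩ := Finsupp.mem_span_range_iff_exists_finsupp.mp (M.bas_span a)
    exact ⟨n, hn.symm⟩
  have hinj : Function.Injective Φ := by
    rintro ⟨a, ha⟩ ⟨b, hb⟩ hab
    obtain ⟨na, hna⟩ := hrep a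
    obtain ⟨nb, hnb⟩ := hrep b
    simp only [hPhi, Prod.mk.injEq, funext_iff] at hab
    obtain ⟨hc1, hc2⟩ := hab
    have hTT : M.mark ⊤ a = M.mark ⊤ b := by
      have hiff := decide_eq_decide.mp hc1
      rcases hsign a ha ⊤ with h | h <;> rcases hsign b hb ⊤ with h' | h' <;>
        rw [h, h'] at hiff ⊢ <;> simp_all
    have hH2 : ∀ (H' : Subgroup P) (h2 : H'.index = 2),
        (M.mark H' a = M.mark ⊤ a ↔ M.mark H' b = M.mark ⊤ b) :=
      fun H' h2 => decide_eq_decide.mp (hc2 ⟨H', h2⟩)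
    apply Subtype.ext
    apply M.mark_injective
    intro K
    have hpar : Even (∑ H ∈ F K, na H) ↔ Even (∑ H ∈ F K, nb H) := by
      rw [← Int.even_sub, ← Finset.sum_sub_distrib, even_iff_two_dvd]
      refine Finset.dvd_sum fun H hH => ?_
      rw [hF, Finset.mem_filter] at hH
      have h2 := hH.2.1
      rw [← even_iff_two_dvd]
      exact Int.even_sub.mpr ((key2 a na hna ha H h2).symm.trans
        ((hH2 H h2).trans (key2 b nb hnb hb H h2)))
    by_cases hE : Even (∑ H ∈ F K, na H)
    · rw [(key a na hna ha K).mpr hE, (key b nb hnb hb K).mpr (hpar.mp hE), hTT]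
    · have h1 : M.mark K a ≠ M.mark ⊤ a := fun h => hE ((key a na hna ha K).mp h)
      have h2 : M.mark K b ≠ M.mark ⊤ b := fun h => (hpar.not.mp hE) ((key b nb hnb hb K).mp h)
      rw [pm_eq (hsign a ha K) (hsign a ha ⊤) h1, pm_eq (hsign b hb K) (hsign b hb ⊤) h2, hTT]
  have hsurj : Function.Surjective Φ := by
    rintro ⟨s, t⟩
    set sv : ℤ := if s then 1 else -1 with hsv
    set D : Finset (Subgroup P) :=
      Finset.univ.filter (fun H => ∃ h2 : H.index = 2, t ⟨H, h2⟩ = false) with hD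
    have hDindex : ∀ H ∈ D, H.index = 2 := by
      intro H hH
      rw [hD, Finset.mem_filter] at hH
      obtain ⟨h2, -⟩ := hH.2
      exact h2
    set e : M.carrier := (if s then 1 else -1) * ∏ H ∈ D, (1 - M.bas H) with he
    have hmark : ∀ K, M.mark K e = sv * ∏ H ∈ D, (if K ≤ H then (-1 : ℤ) else 1) := by
      intro K
      rw [he, map_mul, map_prod]
      congr 1
      · rcases s with _ | _ <;> simp [hsv]
      · refine Finset.prod_congr rfl fun H hH => ?_
        have h2 := hDindex H hH
        rw [map_sub, map_one, M.mark_bas, fixedCard_eq_s18, h2]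
        by_cases hK : K ≤ H <;> simp [hK] <;> norm_num
    have hsignE : ∀ K, M.mark K e = 1 ∨ M.mark K e = -1 := by
      intro K
      rw [hmark]
      have hp : (∏ H ∈ D, (if K ≤ H then (-1:ℤ) else 1)) = 1 ∨
          (∏ H ∈ D, (if K ≤ H then (-1:ℤ) else 1)) = -1 := by
        refine Finset.prod_induction _ (fun x => x = 1 ∨ x = -1) ?_ (Or.inl rfl) ?_
        · rintro x y (rfl|rfl) (rfl|rfl) <;> norm_num
        · intro H _
          by_cases hK : K ≤ H <;> simp [hK]
      rcases hp with h | h <;> rw [h] <;> rcases s with _ | _ <;> simp [hsv]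
    have hunit : IsUnit e := by
      refine IsUnit.of_mul_eq_one (a := e) e (M.mark_injective _ _ fun K => ?_)
      rw [map_mul, map_one]
      rcases hsignE K with h | h <;> rw [h] <;> norm_num
    have hmT : M.mark ⊤ e = sv := by
      rw [hmark]
      have hone : ∀ H ∈ D, (if (⊤:Subgroup P) ≤ H then (-1:ℤ) else 1) = 1 := by
        intro H hH
        rw [if_neg]
        intro hle
        have hHtop : H = ⊤ := top_le_iff.mp hle
        have h2' := hDindex H hH
        rw [hHtop, Subgroup.index_top] at h2'
        norm_num at h2'
      rw [Finset.prod_congr rfl hone, Finset.prod_const_one, mul_one]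
    have hmH : ∀ (H' : Subgroup P), H'.index = 2 →
        M.mark H' e = sv * (if H' ∈ D then -1 else 1) := by
      intro H' h2
      rw [hmark]
      congr 1
      by_cases hmem : H' ∈ D
      · rw [Finset.prod_eq_single_of_mem H' hmem, if_pos (le_refl H'), if_pos hmem]
        intro H hH hne
        rw [if_neg]
        intro hle
        exact hne (index2_le (hDindex H hH) h2 hle).symm
      · rw [if_neg hmem, Finset.prod_eq_one]
        intro H hH
        rw [if_neg]
        intro hle
        have hEq := index2_le (hDindex H hH) h2 hle
        exact hmem (hEq ▸ hH)
    refine ⟨⟨e, hunit⟩, ?_⟩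
    have hPhiE : Φ ⟨e, hunit⟩ = (decide (M.mark ⊤ e = 1),
        fun H : I => decide (M.mark H.1 e = M.mark ⊤ e)) := rfl
    rw [hPhiE]
    refine Prod.ext ?_ ?_
    · show decide (M.mark ⊤ e = 1) = s
      rw [hmT]
      rcases s with _ | _ <;> simp [hsv]
    · show (fun H : I => decide (M.mark H.1 e = M.mark ⊤ e)) = t
      funext H'
      rw [hmH H'.1 H'.2, hmT]
      by_cases hmem : H'.1 ∈ D
      · have ht : t H' = false := by
          rw [hD, Finset.mem_filter] at hmem
          obtain ⟨h2, hfalse⟩ := hmem.2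
          convert hfalse using 2
        rw [if_pos hmem, ht]
        rcases s with _ | _ <;> simp [hsv] <;> norm_num
      · have ht : t H' = true := by
          by_contra hcon
          have hfalse : t H' = false := by
            rcases Bool.dichotomy (t H') with h | h
            · exact h
            · exact absurd h hcon
          apply hmem
          rw [hD, Finset.mem_filter]
          exact ⟨Finset.mem_univ _, ⟨H'.2, by convert hfalse using 2⟩⟩
        rw [if_neg hmem, mul_one, ht]
        rcases s with _ | _ <;> simp [hsv] <;> norm_num
  have hcard := Nat.card_eq_of_bijective Φ ⟨hinj, hsurj⟩
  rw [hcard, Nat.card_prod, Nat.card_fun]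
  have hb : Nat.card Bool = 2 := by simp [Nat.card_eq_fintype_card]
  rw [hb, pow_add, pow_one]
end

section
/- Let P be a dihedral 2-group of order at least 16, Z its center, and I, J non-conjugate non-central subgroups of order 2. For the unit υ_P = [P/P] + [P/1] − [P/I] − [P/J] ∈ B^×(P) and the element δ_P = ([P/I] − [P/IZ]) − ([P/J] − [P/JZ]) ∈ B(P), the 𝔽₂-valued pairing Σ_H ε(υ_P)(H) · (coefficient of [P/H] in δ_P) vanishes, where ε(υ_P)(H) = |υ_P^H|₊ ∈ 𝔽₂; i.e., ε_P(υ_P)(δ_P) = 0 in 𝔽₂. -/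
/-- The unique group isomorphism `{±1} ≃ ℤ/2ℤ`, on the level of integers:
`(1)₊ = 0` and `(-1)₊ = 1`. -/
noncomputable def signPlus (m : ℤ) : ZMod 2 := if m = 1 then 0 else 1

lemma fixedCard0 {G : Type} [Group G] [Fintype G] (H K : Subgroup G)
    (h : ∀ g : G, ¬ K ≤ H.map (MulAut.conj g).toMonoidHom) :
    fixedCard H K = 0 := by
  have : IsEmpty {x : G ⧸ H // ∀ k ∈ K, k • x = x} := by
    constructor
    rintro ⟨x, hx⟩
    induction x using QuotientGroup.induction_on with
    | H g =>
      apply h g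
      intro k hk
      have h1 := hx k hk
      rw [MulAction.Quotient.smul_mk, QuotientGroup.eq] at h1
      rw [Subgroup.mem_map]
      refine ⟨g⁻¹ * k * g, ?_, by simp [MulAut.conj]; group⟩
      have := H.inv_mem h1
      simpa [mul_assoc] using this
  simp [fixedCard, Nat.card_of_isEmpty]

lemma fixedCard_self_pos {G : Type} [Group G] [Fintype G] (H : Subgroup G) :
    0 < fixedCard H H := by
  have hne : Nonempty {x : G ⧸ H // ∀ k ∈ H, k • x = x} := by
    refine ⟨⟨(1 : G), fun k hk => ?_⟩⟩
    rw [MulAction.Quotient.smul_mk, QuotientGroup.eq]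
    simpa using H.inv_mem hk
  have := Nat.card_pos (α := {x : G ⧸ H // ∀ k ∈ H, k • x = x})
  unfold fixedCard
  exact_mod_cast this

lemma card_conj_map {G : Type} [Group G] (H : Subgroup G) (g : G) :
    Nat.card (H.map (MulAut.conj g).toMonoidHom) = Nat.card H :=
  (Nat.card_congr (H.equivMapOfInjective _ (MulAut.conj g).injective).toEquiv).symm

lemma conj_conj_inv {G : Type} [Group G] (H : Subgroup G) (g : G) :
    (H.map (MulAut.conj g).toMonoidHom).map (MulAut.conj g⁻¹).toMonoidHom = H := by
  rw [Subgroup.map_map]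
  convert Subgroup.map_id H using 2
  ext x
  simp [MulAut.conj, mul_assoc]

/-- Let `P` be a dihedral `2`-group of order `2^n ≥ 16`, `Z` its centre, and `I`, `J`
non-conjugate non-central subgroups of order `2`. For the unit
`υ = [P/P] + [P/1] - [P/I] - [P/J]` of `B(P)` and the element
`δ = ([P/I] - [P/IZ]) - ([P/J] - [P/JZ])` of `B(P)`, the `𝔽₂`-valued pairing
`ε_P(υ)(δ) = Σ_H ε_P(υ)(H) · (coefficient of [P/H] in δ)` vanishes, where
`ε_P(υ)([P/H]) = |υ^H|₊`. -/
theorem stmt19 {P : Type} [Group P] [Fintype P]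
    (n : ℕ) (hn : 4 ≤ n) (hcard : Fintype.card P = 2 ^ n)
    (r s : P) (hr : orderOf r = 2 ^ (n - 1))
    (hs2 : s ^ 2 = 1) (hs1 : s ≠ 1) (hsrs : s * r * s = r⁻¹)
    (hgen : Subgroup.closure {r, s} = ⊤)
    (M : BurnsideModel P)
    (I J : Subgroup P) (hI : Nat.card I = 2) (hJ : Nat.card J = 2)
    (hIc : ¬ I ≤ Subgroup.center P) (hJc : ¬ J ≤ Subgroup.center P)
    (hIJ : ∀ g : P, J ≠ I.map (MulAut.conj g).toMonoidHom)
    (v : M.carrier) (hv : v = 1 + M.bas ⊥ - M.bas I - M.bas J)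
    (hunit : IsUnit v) :
    signPlus (M.mark I v) - signPlus (M.mark (I ⊔ Subgroup.center P) v) -
        signPlus (M.mark J v) + signPlus (M.mark (J ⊔ Subgroup.center P) v) = 0 := by
  -- the centre is nontrivial (P is a nontrivial 2-group)
  have hPnt : Nontrivial P := by
    rw [← Fintype.one_lt_card_iff_nontrivial, hcard]
    exact one_lt_two.trans_le (Nat.le_self_pow (by omega) 2)
  have hZnt : Nontrivial (Subgroup.center P) :=
    IsPGroup.center_nontrivial (IsPGroup.of_card (p := 2)
      (by rw [Nat.card_eq_fintype_card, hcard]))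
  have hZcard : 2 ≤ Nat.card (Subgroup.center P) := Finite.one_lt_card_iff_nontrivial.mpr hZnt
  -- generic facts for a noncentral subgroup of order 2
  have key : ∀ T : Subgroup P, Nat.card T = 2 → ¬ T ≤ Subgroup.center P →
      2 < Nat.card ((T ⊔ Subgroup.center P : Subgroup P) : Type) := by
    intro T hT hTc
    have hle : T ≤ T ⊔ Subgroup.center P := le_sup_left
    have hne : T ≠ T ⊔ Subgroup.center P := by
      intro he
      have hZT : Subgroup.center P ≤ T := he ▸ le_sup_right
      have : Subgroup.center P = T :=
        Subgroup.eq_of_le_of_card_ge hZT (by omega)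
      exact hTc (this ▸ le_refl T)
    have h1 : Nat.card T ≤ Nat.card ((T ⊔ Subgroup.center P : Subgroup P)) :=
      Subgroup.card_le_of_le hle
    rcases lt_or_eq_of_le h1 with h | h
    · omega
    · exact absurd (Subgroup.eq_of_le_of_card_ge hle h.ge) hne
  have hIZ := key I hI hIc
  have hJZ := key J hJ hJc
  -- fixed-point counts
  have fbot : ∀ K : Subgroup P, K ≠ ⊥ → fixedCard ⊥ K = 0 := by
    intro K hK
    apply fixedCard0
    intro g hle
    rw [Subgroup.map_bot, le_bot_iff] at hle
    exact hK hle
  have hIbot : I ≠ ⊥ := by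
    intro h; rw [h, Subgroup.card_bot] at hI; omega
  have hJbot : J ≠ ⊥ := by
    intro h; rw [h, Subgroup.card_bot] at hJ; omega
  have hIZbot : I ⊔ Subgroup.center P ≠ ⊥ := by
    intro h; rw [h, Subgroup.card_bot] at hIZ; omega
  have hJZbot : J ⊔ Subgroup.center P ≠ ⊥ := by
    intro h; rw [h, Subgroup.card_bot] at hJZ; omega
  -- non-conjugacy: I is not contained in any conjugate of J, and vice versa
  have hJI : fixedCard J I = 0 := by
    apply fixedCard0
    intro g hle
    have hc : Nat.card (J.map (MulAut.conj g).toMonoidHom) = 2 := by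
      rw [card_conj_map]; exact hJ
    have heq : I = J.map (MulAut.conj g).toMonoidHom :=
      Subgroup.eq_of_le_of_card_ge hle (by omega)
    apply hIJ g⁻¹
    rw [heq, conj_conj_inv]
  have hIJ' : fixedCard I J = 0 := by
    apply fixedCard0
    intro g hle
    have hc : Nat.card (I.map (MulAut.conj g).toMonoidHom) = 2 := by
      rw [card_conj_map]; exact hI
    exact hIJ g (Subgroup.eq_of_le_of_card_ge hle (by omega))
  -- big subgroups fix nothing on P/I and P/J
  have fbig : ∀ (T K : Subgroup P), Nat.card T = 2 → 2 < Nat.card K → fixedCard T K = 0 := by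
    intro T K hT hK
    apply fixedCard0
    intro g hle
    have := Subgroup.card_le_of_le hle
    rw [card_conj_map, hT] at this
    omega
  -- compute the four marks
  have expand : ∀ K : Subgroup P,
      M.mark K v = 1 + fixedCard ⊥ K - fixedCard I K - fixedCard J K := by
    intro K
    rw [hv]
    simp [map_add, map_sub, map_one, M.mark_bas]
  have m1 : M.mark I v = 1 - fixedCard I I := by
    rw [expand, fbot I hIbot, hJI]; ring
  have m2 : M.mark J v = 1 - fixedCard J J := by
    rw [expand, fbot J hJbot, hIJ']; ring
  have m3 : M.mark (I ⊔ Subgroup.center P) v = 1 := by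
    rw [expand, fbot _ hIZbot, fbig I _ hI hIZ, fbig J _ hJ hIZ]; ring
  have m4 : M.mark (J ⊔ Subgroup.center P) v = 1 := by
    rw [expand, fbot _ hJZbot, fbig I _ hI hJZ, fbig J _ hJ hJZ]; ring
  have p1 : M.mark I v ≠ 1 := by
    have := fixedCard_self_pos I; rw [m1]; omega
  have p2 : M.mark J v ≠ 1 := by
    have := fixedCard_self_pos J; rw [m2]; omega
  rw [m3, m4]
  simp [signPlus, p1, p2]
end
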